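/- arXiv:2507.11122 — 5 statements merged into one kernel-verified Lean document; each statement's English description precedes it below -/
import Mathlib

section
/- For 2 ≤ r ≤ n−1, every element of the set C = (⋃_{m=r+1}^{n} B_m) ∪ {ρ_2,...,ρ_r} is undecomposable in ORD(n,r), i.e., if ζ ∈ C and ζ = αβ with α, β ∈ ORD(n,r), then ζ = α or ζ = β. -/
open Finset

namespace ORDPaper

/-- `f` is a full transformation of the chain `{1,…,n}`, acting as the identity outside. -/
def IsTrans (n : ℕ) (f : ℕ → ℕ) : Prop :=
  (∀ x, 1 ≤ x → x ≤ n → 1 ≤ f x ∧ f x ≤ n) ∧ ∀ x, ¬(1 ≤ x ∧ x ≤ n) → f x = x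

/-- Composition of transformations, written left to right: `x(αβ) = (xα)β`. -/
def comp (f g : ℕ → ℕ) : ℕ → ℕ := fun x => g (f x)

/-- The value of `f` at the cyclic successor of `i` (so `(n+1)α = 1α`). -/
def nxt (n : ℕ) (f : ℕ → ℕ) (i : ℕ) : ℕ := if i = n then f 1 else f (i + 1)

/-- `(1α,…,nα)` is cyclic: there is at most one descent (cyclically). -/
def Cyclic (n : ℕ) (f : ℕ → ℕ) : Prop :=
  ((Finset.Icc 1 n).filter (fun i => nxt n f i < f i)).card ≤ 1

/-- `(1α,…,nα)` is anti-cyclic: there is at most one ascent (cyclically). -/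
def AntiCyclic (n : ℕ) (f : ℕ → ℕ) : Prop :=
  ((Finset.Icc 1 n).filter (fun i => f i < nxt n f i)).card ≤ 1

/-- Order-decreasing on `{1,…,n}`. -/
def Decreasing (n : ℕ) (f : ℕ → ℕ) : Prop := ∀ x, 1 ≤ x → x ≤ n → f x ≤ x

/-- Image of `{1,…,n}` under `f`. -/
def im (n : ℕ) (f : ℕ → ℕ) : Finset ℕ := (Finset.Icc 1 n).image f

/-- Fixed points of `f` in `{1,…,n}`. -/
def fixSet (n : ℕ) (f : ℕ → ℕ) : Finset ℕ := (Finset.Icc 1 n).filter (fun x => f x = x)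

/-- The semigroup `D_n` of order-decreasing full transformations. -/
def Dn (n : ℕ) : Set (ℕ → ℕ) := {f | IsTrans n f ∧ Decreasing n f}

/-- Orientation-preserving order-decreasing transformations. -/
def OPD (n : ℕ) : Set (ℕ → ℕ) := {f | f ∈ Dn n ∧ Cyclic n f}

/-- Oriented order-decreasing transformations. -/
def ORDn (n : ℕ) : Set (ℕ → ℕ) := {f | f ∈ Dn n ∧ (Cyclic n f ∨ AntiCyclic n f)}

/-- `RD*_n`: orientation-reversing, order-decreasing, not orientation-preserving. -/
def RDstar (n : ℕ) : Set (ℕ → ℕ) := {f | f ∈ Dn n ∧ AntiCyclic n f ∧ ¬ Cyclic n f}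

/-- `ORD(n,r)`. -/
def ORDr (n r : ℕ) : Set (ℕ → ℕ) := {f | f ∈ ORDn n ∧ (im n f).card ≤ r}

/-- `OPD(n,r)`. -/
def OPDr (n r : ℕ) : Set (ℕ → ℕ) := {f | f ∈ OPD n ∧ (im n f).card ≤ r}

/-- The order-reversing degree: `min(X_n \ 1α⁻¹)`. -/
noncomputable def ordDeg (n : ℕ) (f : ℕ → ℕ) : ℕ := sInf {x | 1 ≤ x ∧ x ≤ n ∧ f x ≠ 1}

/-- Minimum of the preimage of `x` under `f` inside `{1,…,n}`. -/
noncomputable def preMin (n : ℕ) (f : ℕ → ℕ) (x : ℕ) : ℕ := sInf {y | 1 ≤ y ∧ y ≤ n ∧ f y = x}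

/-- Membership in the subsemigroup generated by `A`. -/
inductive gen (A : Set (ℕ → ℕ)) : (ℕ → ℕ) → Prop
  | base {f} : f ∈ A → gen A f
  | mul {f g} : gen A f → gen A g → gen A (comp f g)

/-- Rank of a transformation semigroup `S`. -/
noncomputable def rank (S : Set (ℕ → ℕ)) : ℕ :=
  sInf {k | ∃ A : Set (ℕ → ℕ), A ⊆ S ∧ A.Finite ∧ A.ncard = k ∧ {f | gen A f} = S}

/-- `r̂ = min{r, ⌈(n+1)/2⌉}`. -/
def rhat (n r : ℕ) : ℕ := min r ((n + 2) / 2)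

/-- `ρ_m` fixes `1,…,m` and sends `m+1,…,n` to `1`. -/
def rho (n m : ℕ) : ℕ → ℕ := fun x =>
  if ¬(1 ≤ x ∧ x ≤ n) then x else if x ≤ m then x else 1

/-- The order-preserving degree `opd(α) = max{m : α|_{X_m} is order-preserving}`. -/
noncomputable def opd (n : ℕ) (f : ℕ → ℕ) : ℕ :=
  sSup {m | m ≤ n ∧ ∀ x y, 1 ≤ x → x ≤ y → y ≤ m → f x ≤ f y}

/-- The set `C = (⋃_{m=r+1}^n B_m) ∪ {ρ_2,…,ρ_r}`. -/
def Cset (n r : ℕ) : Set (ℕ → ℕ) :=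
  {f | (f ∈ OPD n ∧ comp f f = f ∧ (im n f).card = r ∧ r + 1 ≤ opd n f ∧ opd n f ≤ n)
    ∨ (∃ m, 2 ≤ m ∧ m ≤ r ∧ f = rho n m)}

/-- The map `λ_{m,r}`: sends `[1,m-1]` to `1`, maps `x ∈ [m, min(2m-p-2,n)]` to `2m-x`
(where `p = max{0, m-r}` is `m - r` in truncated subtraction), and the rest of `[1,n]` to `1`. -/
def lam (n r m : ℕ) : ℕ → ℕ := fun x =>
  if ¬(1 ≤ x ∧ x ≤ n) then x
  else if x < m then 1
  else if x ≤ min (2 * m - (m - r) - 2) n then 2 * m - x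
  else 1

/-- `G_{n,r} = {λ_{m,r} : 3 ≤ m ≤ n-1}`. -/
def Gset (n r : ℕ) : Set (ℕ → ℕ) := {f | ∃ m, 3 ≤ m ∧ m ≤ n - 1 ∧ f = lam n r m}

/-- `L_{m,r}`. -/
def Lset (n r m : ℕ) : Set (ℕ → ℕ) :=
  {f | f ∈ ORDn n ∧ im n f = im n (lam n r m) ∧
    ∀ x ∈ im n (lam n r m), preMin n f x = preMin n (lam n r m) x}

/-- `α_{m,r}`: the idempotent fixing `{1} ∪ [m, 2m-p-2]` and sending the rest of `[1,n]` to `1`. -/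
def alphaMap (n r m : ℕ) : ℕ → ℕ := fun x =>
  if ¬(1 ≤ x ∧ x ≤ n) then x
  else if x < m then 1
  else if x ≤ 2 * m - (m - r) - 2 then x
  else 1

/-- `β_{m,r}`: sends `[1,m-1]` to `1`, maps `m,…,2m-p-3` order-reversingly to `m,…,p+3`,
and `[2m-p-2, n]` to `p+2`. -/
def betaMap (n r m : ℕ) : ℕ → ℕ := fun x =>
  if ¬(1 ≤ x ∧ x ≤ n) then x
  else if x < m then 1
  else if x ≤ 2 * m - (m - r) - 3 then 2 * m - x
  else (m - r) + 2

/-- `S` is a subsemigroup of `T`. -/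
def IsSubsemigroupOf (S T : Set (ℕ → ℕ)) : Prop :=
  S ⊆ T ∧ ∀ f ∈ S, ∀ g ∈ S, comp f g ∈ S

/-- `S` is a maximal subsemigroup of `T`. -/
def IsMaximalSubsemigroupOf (S T : Set (ℕ → ℕ)) : Prop :=
  IsSubsemigroupOf S T ∧ S ≠ T ∧ ∀ U, IsSubsemigroupOf U T → S ⊆ U → U = S ∨ U = T


section Aux

lemma exists_drop (f : ℕ → ℕ) : ∀ q p, p < q → f q < f p →
    ∃ i, p ≤ i ∧ i < q ∧ f (i + 1) < f i := by
  intro q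
  induction q with
  | zero => intro p hp; omega
  | succ q ih =>
    intro p hpq hf
    by_cases hd : f (q + 1) < f q
    · exact ⟨q, by omega, by omega, hd⟩
    · have hpq' : p < q := by
        rcases Nat.lt_or_ge p q with h' | h'
        · exact h'
        · have : p = q := by omega
          subst this; omega
      obtain ⟨i, h1', h2', h3'⟩ := ih p hpq' (by omega)
      exact ⟨i, h1', by omega, h3'⟩

lemma exists_rise (f : ℕ → ℕ) : ∀ q p, p < q → f p < f q →
    ∃ i, p ≤ i ∧ i < q ∧ f i < f (i + 1) := by
  intro q
  induction q with
  | zero => intro p hp; omega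
  | succ q ih =>
    intro p hpq hf
    by_cases hd : f q < f (q + 1)
    · exact ⟨q, by omega, by omega, hd⟩
    · have hpq' : p < q := by
        rcases Nat.lt_or_ge p q with h' | h'
        · exact h'
        · have : p = q := by omega
          subst this; omega
      obtain ⟨i, h1', h2', h3'⟩ := ih p hpq' (by omega)
      exact ⟨i, h1', by omega, h3'⟩

lemma key_lemma (n m u v : ℕ) (f : ℕ → ℕ)
    (hcyc : Cyclic n f ∨ AntiCyclic n f)
    (h1 : f 1 = 1) (h2 : f 2 = 2) (hm : f m = m) (hm2 : 2 ≤ m)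
    (hmu : m < u) (huv : u < v) (hvn : v ≤ n)
    (hu : f u = 1) (hv : 2 ≤ f v) : False := by
  obtain ⟨i₁, hi₁l, hi₁r, hi₁d⟩ := exists_drop f u m hmu (by omega)
  obtain ⟨j₂, hj₂l, hj₂r, hj₂a⟩ := exists_rise f v u huv (by omega)
  rcases hcyc with hC | hA
  · -- two descents
    have hdes2 : ∃ i, v ≤ i ∧ i ≤ n ∧ nxt n f i < f i := by
      by_cases hfn : f 1 < f n
      · refine ⟨n, hvn, le_refl n, ?_⟩
        unfold nxt; rw [if_pos rfl]; exact hfn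
      · have hvn' : v < n := by
          rcases Nat.lt_or_ge v n with h' | h'
          · exact h'
          · have : v = n := by omega
            subst this; omega
        obtain ⟨i, hl, hr, hd⟩ := exists_drop f n v hvn' (by omega)
        refine ⟨i, hl, by omega, ?_⟩
        unfold nxt; rw [if_neg (by omega)]; exact hd
    obtain ⟨i₂, hi₂l, hi₂r, hi₂d⟩ := hdes2
    have hsub : ({i₁, i₂} : Finset ℕ) ⊆
        (Finset.Icc 1 n).filter (fun i => nxt n f i < f i) := by
      intro i hi
      simp only [Finset.mem_insert, Finset.mem_singleton] at hi
      simp only [Finset.mem_filter, Finset.mem_Icc]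
      rcases hi with rfl | rfl
      · refine ⟨⟨by omega, by omega⟩, ?_⟩
        unfold nxt; rw [if_neg (by omega)]; exact hi₁d
      · exact ⟨⟨by omega, hi₂r⟩, hi₂d⟩
    have hne : i₁ ≠ i₂ := by omega
    have := Finset.card_le_card hsub
    rw [Finset.card_pair hne] at this
    unfold Cyclic at hC
    omega
  · -- two ascents
    have hsub : ({1, j₂} : Finset ℕ) ⊆
        (Finset.Icc 1 n).filter (fun i => f i < nxt n f i) := by
      intro i hi
      simp only [Finset.mem_insert, Finset.mem_singleton] at hi
      simp only [Finset.mem_filter, Finset.mem_Icc]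
      rcases hi with rfl | rfl
      · refine ⟨⟨le_refl 1, by omega⟩, ?_⟩
        unfold nxt; rw [if_neg (by omega), show (1:ℕ)+1 = 2 from rfl]; omega
      · refine ⟨⟨by omega, by omega⟩, ?_⟩
        unfold nxt; rw [if_neg (by omega)]; exact hj₂a
    have hne : (1 : ℕ) ≠ j₂ := by omega
    have := Finset.card_le_card hsub
    rw [Finset.card_pair hne] at this
    unfold AntiCyclic at hA
    omega

lemma rho_eq (n m x : ℕ) (h1 : 1 ≤ x) (h2 : x ≤ n) (h3 : x ≤ m) : rho n m x = x := by
  unfold rho; rw [if_neg (by omega), if_pos h3]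

lemma rho_one (n m x : ℕ) (h1 : 1 ≤ x) (h2 : x ≤ n) (h3 : m < x) : rho n m x = 1 := by
  unfold rho; rw [if_neg (by omega), if_neg (by omega)]

lemma rho_out (n m x : ℕ) (h : ¬(1 ≤ x ∧ x ≤ n)) : rho n m x = x := by
  unfold rho; rw [if_pos h]

end Aux

theorem cset_undecomposable (n r : ℕ) (hn : 4 ≤ n) (hr : 2 ≤ r) (hrn : r ≤ n - 1)
    (ζ : ℕ → ℕ) (hζ : ζ ∈ Cset n r) (α β : ℕ → ℕ)
    (hα : α ∈ ORDr n r) (hβ : β ∈ ORDr n r) (h : comp α β = ζ) :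
    ζ = α ∨ ζ = β := by
  obtain ⟨⟨⟨hαT, hαD⟩, hαC⟩, hαcard⟩ := hα
  obtain ⟨⟨⟨hβT, hβD⟩, hβC⟩, hβcard⟩ := hβ
  have hpt : ∀ x, β (α x) = ζ x := fun x => congrFun h x
  rcases hζ with ⟨⟨⟨hζT, hζD⟩, hζC⟩, hidem, hcard, _, _⟩ | ⟨m, hm2, hmr, hrho⟩
  · -- idempotent case: ζ = α
    left
    have hfix : ∀ y ∈ im n ζ, α y = y ∧ β y = y := by
      intro y hy
      simp only [im, Finset.mem_image, Finset.mem_Icc] at hy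
      obtain ⟨z, ⟨hz1, hz2⟩, rfl⟩ := hy
      have hb := hζT.1 z hz1 hz2
      have hζζ : ζ (ζ z) = ζ z := congrFun hidem z
      have h1 := hpt (ζ z)
      rw [hζζ] at h1
      have hb2 := hαT.1 (ζ z) hb.1 hb.2
      have hd1 := hαD (ζ z) hb.1 hb.2
      have hd2 := hβD (α (ζ z)) hb2.1 hb2.2
      have ha : α (ζ z) = ζ z := by omega
      refine ⟨ha, ?_⟩
      rw [ha] at h1
      exact h1
    have hsub : im n ζ ⊆ im n α := by
      intro y hy
      have hy' := hy
      simp only [im, Finset.mem_image, Finset.mem_Icc] at hy'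
      obtain ⟨z, ⟨hz1, hz2⟩, rfl⟩ := hy'
      have hb := hζT.1 z hz1 hz2
      simp only [im, Finset.mem_image, Finset.mem_Icc]
      exact ⟨ζ z, ⟨hb.1, hb.2⟩, (hfix (ζ z) hy).1⟩
    have heq : im n ζ = im n α :=
      Finset.eq_of_subset_of_card_le hsub (by omega)
    funext x
    by_cases hx : 1 ≤ x ∧ x ≤ n
    · have hax : α x ∈ im n α := by
        simp only [im, Finset.mem_image, Finset.mem_Icc]
        exact ⟨x, ⟨hx.1, hx.2⟩, rfl⟩
      rw [← heq] at hax
      have := (hfix (α x) hax).2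
      rw [← hpt x, this]
    · rw [hζT.2 x hx, hαT.2 x hx]
  · -- ρ_m case
    subst hrho
    have hmn : m + 1 ≤ n := by omega
    have hfix : ∀ x, 1 ≤ x → x ≤ m → α x = x ∧ β x = x := by
      intro x h1 h3
      have hxn : x ≤ n := by omega
      have hζx : rho n m x = x := rho_eq n m x h1 hxn h3
      have hh := hpt x
      rw [hζx] at hh
      have hb := hαT.1 x h1 hxn
      have hd1 := hαD x h1 hxn
      have hd2 := hβD (α x) hb.1 hb.2
      have ha : α x = x := by omega
      refine ⟨ha, ?_⟩
      rw [ha] at hh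
      exact hh
    by_contra hcon
    push_neg at hcon
    obtain ⟨hne1, hne2⟩ := hcon
    have hex : ∀ g : ℕ → ℕ, IsTrans n g → (∀ x, 1 ≤ x → x ≤ m → g x = x) →
        rho n m ≠ g → ∃ x, m < x ∧ x ≤ n ∧ g x ≠ 1 := by
      intro g hT hfg hne
      obtain ⟨x, hx⟩ := Function.ne_iff.mp hne
      by_cases h1 : 1 ≤ x ∧ x ≤ n
      · by_cases h2 : x ≤ m
        · exact absurd ((rho_eq n m x h1.1 h1.2 h2).trans (hfg x h1.1 h2).symm) hx
        · refine ⟨x, by omega, h1.2, ?_⟩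
          rw [rho_one n m x h1.1 h1.2 (by omega)] at hx
          exact fun hh => hx hh.symm
      · exact absurd ((rho_out n m x h1).trans (hT.2 x h1).symm) hx
    obtain ⟨xa, hxam, hxan, hxa1⟩ := hex α hαT (fun x a b => (hfix x a b).1) hne1
    obtain ⟨xb, hxbm, hxbn, hxb1⟩ := hex β hβT (fun x a b => (hfix x a b).2) hne2
    have hone : ∀ x, m < x → x ≤ n → β (α x) = 1 := fun x hx1 hx2 =>
      (hpt x).trans (rho_one n m x (by omega) hx2 hx1)
    have hα1 := (hfix 1 (le_refl 1) (by omega)).1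
    have hα2 := (hfix 2 (by omega) hm2).1
    have hαm := (hfix m (by omega) (le_refl m)).1
    by_cases hc : α (m + 1) = 1
    · have hlt : m + 1 < xa := by
        have : m + 1 ≠ xa := fun e => hxa1 (e ▸ hc)
        omega
      have hbnd := hαT.1 xa (by omega) hxan
      exact key_lemma n m (m + 1) xa α hαC hα1 hα2 hαm hm2 (by omega) hlt hxan hc
        (by omega)
    · have hb := hαT.1 (m + 1) (by omega) hmn
      have hd := hαD (m + 1) (by omega) hmn
      have ham : α (m + 1) = m + 1 := by
        by_contra hne
        have h2m : α (m + 1) ≤ m := by omega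
        have hfb := (hfix (α (m + 1)) hb.1 h2m).2
        have ho := hone (m + 1) (by omega) hmn
        omega
      have hbm1 : β (m + 1) = 1 := by
        have := hone (m + 1) (by omega) hmn
        rwa [ham] at this
      have hlt : m + 1 < xb := by
        have : m + 1 ≠ xb := fun e => hxb1 (e ▸ hbm1)
        omega
      have hbnd := hβT.1 xb (by omega) hxbn
      exact key_lemma n m (m + 1) xb β hβC ((hfix 1 (le_refl 1) (by omega)).2)
        ((hfix 2 (by omega) hm2).2) ((hfix m (by omega) (le_refl m)).2) hm2
        (by omega) hlt hxbn hbm1 (by omega)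


end ORDPaper
end

section
/- For n ≥ 4 and 3 ≤ r ≤ n−1, ORD(n,r) is generated by OPD(n,r) ∪ G_{n,r̂}, where r̂ = min{r, ⌈(n+1)/2⌉}. -/
open Finset

namespace ORDPaper

/-! ### Auxiliary development -/

section Aux

variable {n r : ℕ} {f g : ℕ → ℕ}

lemma IsTrans.one_le (hf : IsTrans n f) {x : ℕ} (h1 : 1 ≤ x) (h2 : x ≤ n) : 1 ≤ f x :=
  (hf.1 x h1 h2).1

lemma IsTrans.le_n (hf : IsTrans n f) {x : ℕ} (h1 : 1 ≤ x) (h2 : x ≤ n) : f x ≤ n :=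
  (hf.1 x h1 h2).2

lemma Dn_one (hf : IsTrans n f) (hd : Decreasing n f) (hn : 1 ≤ n) : f 1 = 1 :=
  le_antisymm (hd 1 le_rfl hn) (hf.one_le le_rfl hn)

lemma comp_isTrans (hf : IsTrans n f) (hg : IsTrans n g) : IsTrans n (comp f g) := by
  constructor
  · intro x h1 h2
    exact hg.1 (f x) (hf.one_le h1 h2) (hf.le_n h1 h2)
  · intro x hx
    simp only [comp, hf.2 x hx, hg.2 x hx]

lemma comp_decreasing (hf : IsTrans n f) (hdf : Decreasing n f) (hdg : Decreasing n g) :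
    Decreasing n (comp f g) := by
  intro x h1 h2
  exact le_trans (hdg (f x) (hf.one_le h1 h2) (hf.le_n h1 h2)) (hdf x h1 h2)

lemma comp_card_le (hf : IsTrans n f) : (im n (comp f g)).card ≤ (im n f).card := by
  have h : im n (comp f g) = (im n f).image g := by
    rw [im, im, Finset.image_image]; rfl
  rw [h]
  exact Finset.card_image_le

/-- Chain monotone lemma. -/
lemma chain_mono {a b : ℕ} (h : ∀ i, a ≤ i → i + 1 ≤ b → f i ≤ f (i + 1)) :
    ∀ x y, a ≤ x → x ≤ y → y ≤ b → f x ≤ f y := by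
  intro x y hax hxy
  induction y, hxy using Nat.le_induction with
  | base => intro _; exact le_rfl
  | succ y hy ih =>
    intro hyb
    exact le_trans (ih (by omega)) (h y (by omega) hyb)

lemma chain_anti {a b : ℕ} (h : ∀ i, a ≤ i → i + 1 ≤ b → f (i + 1) ≤ f i) :
    ∀ x y, a ≤ x → x ≤ y → y ≤ b → f y ≤ f x := by
  intro x y hax hxy
  induction y, hxy using Nat.le_induction with
  | base => intro _; exact le_rfl
  | succ y hy ih =>
    intro hyb
    exact le_trans (h y (by omega) hyb) (ih (by omega))

/-- Shape of a decreasing cyclic map: nondecreasing then constant `1`. -/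
def ShA (n : ℕ) (f : ℕ → ℕ) : Prop :=
  ∃ c, c ≤ n ∧ (∀ x y, 1 ≤ x → x ≤ y → y ≤ c → f x ≤ f y) ∧ ∀ x, c < x → x ≤ n → f x = 1

/-- Shape of a decreasing anti-cyclic map: constant `1` then nonincreasing. -/
def ShB (n : ℕ) (f : ℕ → ℕ) : Prop :=
  ∃ q, 1 ≤ q ∧ q ≤ n ∧ (∀ x, 1 ≤ x → x ≤ q → f x = 1) ∧
    ∀ x y, q < x → x ≤ y → y ≤ n → f y ≤ f x

lemma ShA.cyclic (hS : ShA n f) (hf : IsTrans n f) (hd : Decreasing n f) (hn : 1 ≤ n) :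
    Cyclic n f := by
  obtain ⟨c, hcn, hmono, htail⟩ := hS
  have hf1 : f 1 = 1 := Dn_one hf hd hn
  rw [Cyclic, Finset.card_le_one]
  have key : ∀ i ∈ (Finset.Icc 1 n).filter (fun i => nxt n f i < f i),
      i = if c < n then c else n := by
    intro i hi
    rw [Finset.mem_filter, Finset.mem_Icc] at hi
    obtain ⟨⟨hi1, hin⟩, hdesc⟩ := hi
    rcases eq_or_lt_of_le hin with heq | hlt
    · -- i = n : descent iff f 1 < f n
      subst heq
      rw [nxt, if_pos rfl, hf1] at hdesc
      by_cases hc : c < i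
      · exact absurd (htail i hc le_rfl) (by omega)
      · rw [if_neg (by omega)]
    · rw [nxt, if_neg (by omega)] at hdesc
      by_cases h1 : i + 1 ≤ c
      · exact absurd (hmono i (i + 1) hi1 (by omega) h1) (by omega)
      by_cases h2 : c < i
      · have e1 : f i = 1 := htail i h2 hin
        have : 1 ≤ f (i + 1) := hf.one_le (by omega) (by omega)
        omega
      · rw [if_pos (by omega)]; omega
  intro a ha b hb
  rw [key a ha, key b hb]

lemma ShB.anticyclic (hS : ShB n f) (hf : IsTrans n f) (hd : Decreasing n f) (hn : 1 ≤ n) :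
    AntiCyclic n f := by
  obtain ⟨q, hq1, hqn, hone, hanti⟩ := hS
  have hf1 : f 1 = 1 := Dn_one hf hd hn
  rw [AntiCyclic, Finset.card_le_one]
  have key : ∀ i ∈ (Finset.Icc 1 n).filter (fun i => f i < nxt n f i), i = q := by
    intro i hi
    rw [Finset.mem_filter, Finset.mem_Icc] at hi
    obtain ⟨⟨hi1, hin⟩, hasc⟩ := hi
    rcases eq_or_lt_of_le hin with heq | hlt
    · subst heq
      rw [nxt, if_pos rfl, hf1] at hasc
      have : 1 ≤ f i := hf.one_le hi1 le_rfl
      omega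
    · rw [nxt, if_neg (by omega)] at hasc
      by_cases h1 : i + 1 ≤ q
      · have e1 : f (i + 1) = 1 := hone (i + 1) (by omega) h1
        have : 1 ≤ f i := hf.one_le hi1 (by omega)
        omega
      by_cases h2 : q < i
      · exact absurd (hanti i (i + 1) h2 (by omega) (by omega)) (by omega)
      · omega
  intro a ha b hb
  rw [key a ha, key b hb]

lemma cyclic_shA (hC : Cyclic n f) (hf : IsTrans n f) (hd : Decreasing n f) (hn : 1 ≤ n) :
    ShA n f := by
  have hf1 : f 1 = 1 := Dn_one hf hd hn
  set D := (Finset.Icc 1 n).filter (fun i => nxt n f i < f i) with hD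
  have hstep : ∀ i, 1 ≤ i → i + 1 ≤ n → i ∉ D → f i ≤ f (i + 1) := by
    intro i h1 h2 hni
    by_contra hcon
    exact hni (by
      rw [hD, Finset.mem_filter, Finset.mem_Icc, nxt, if_neg (by omega)]
      exact ⟨⟨h1, by omega⟩, by omega⟩)
  rcases D.eq_empty_or_nonempty with hDe | ⟨d, hdD⟩
  · refine ⟨n, le_rfl, chain_mono (fun i hi1 hi2 => hstep i hi1 hi2 (by simp [hDe])), ?_⟩
    intro x hx1 hx2; omega
  · have huniq : ∀ i ∈ D, i = d := fun i hi => Finset.card_le_one.1 hC i hi d hdD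
    have hd_mem := hdD
    rw [hD, Finset.mem_filter, Finset.mem_Icc] at hd_mem
    obtain ⟨⟨hd1, hdn⟩, _⟩ := hd_mem
    by_cases hdeq : d = n
    · refine ⟨n, le_rfl, chain_mono (fun i hi1 hi2 => hstep i hi1 hi2 ?_), fun x hx1 hx2 => by omega⟩
      intro hmem
      have := huniq i hmem
      omega
    · -- d < n; no wrap descent, so f n = 1
      have hnD : n ∉ D := fun hmem => hdeq (huniq n hmem).symm
      have hfn : f n = 1 := by
        have : ¬ (nxt n f n < f n) := by
          intro hc
          exact hnD (by rw [hD, Finset.mem_filter, Finset.mem_Icc]; exact ⟨⟨hn, le_rfl⟩, hc⟩)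
        rw [nxt, if_pos rfl, hf1] at this
        have := hf.one_le hn le_rfl
        omega
      have hmono1 : ∀ x y, 1 ≤ x → x ≤ y → y ≤ d → f x ≤ f y := by
        refine chain_mono (fun i hi1 hi2 => hstep i hi1 (by omega) ?_)
        intro hmem; have := huniq i hmem; omega
      have hmono2 : ∀ x y, d + 1 ≤ x → x ≤ y → y ≤ n → f x ≤ f y := by
        refine chain_mono (fun i hi1 hi2 => hstep i (by omega) hi2 ?_)
        intro hmem; have := huniq i hmem; omega
      refine ⟨d, by omega, hmono1, ?_⟩
      intro x hx1 hx2
      have h1 : f x ≤ f n := hmono2 x n (by omega) hx2 le_rfl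
      have h2 : 1 ≤ f x := hf.one_le (by omega) hx2
      omega

lemma anticyclic_shB (hA : AntiCyclic n f) (hf : IsTrans n f) (hd : Decreasing n f) (hn : 1 ≤ n) :
    ShB n f := by
  have hf1 : f 1 = 1 := Dn_one hf hd hn
  set D := (Finset.Icc 1 n).filter (fun i => f i < nxt n f i) with hD
  have hstep : ∀ i, 1 ≤ i → i + 1 ≤ n → i ∉ D → f (i + 1) ≤ f i := by
    intro i h1 h2 hni
    by_contra hcon
    exact hni (by
      rw [hD, Finset.mem_filter, Finset.mem_Icc, nxt, if_neg (by omega)]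
      exact ⟨⟨h1, by omega⟩, by omega⟩)
  rcases D.eq_empty_or_nonempty with hDe | ⟨d, hdD⟩
  · have hanti : ∀ x y, 1 ≤ x → x ≤ y → y ≤ n → f y ≤ f x :=
      chain_anti (fun i hi1 hi2 => hstep i hi1 hi2 (by simp [hDe]))
    refine ⟨n, hn, le_rfl, ?_, ?_⟩
    · intro x hx1 hx2
      have h1 : f x ≤ f 1 := hanti 1 x le_rfl hx1 hx2
      have h2 : 1 ≤ f x := hf.one_le hx1 hx2
      omega
    · intro x y hx hxy hyn; omega
  · have huniq : ∀ i ∈ D, i = d := fun i hi => Finset.card_le_one.1 hA i hi d hdD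
    have hd_mem := hdD
    rw [hD, Finset.mem_filter, Finset.mem_Icc] at hd_mem
    obtain ⟨⟨hd1, hdn⟩, hasc⟩ := hd_mem
    have hdlt : d < n := by
      rcases eq_or_lt_of_le hdn with heq | hlt
      · rw [heq, nxt, if_pos rfl, hf1] at hasc
        have := hf.one_le hn (le_refl n)
        omega
      · exact hlt
    have hanti1 : ∀ x y, 1 ≤ x → x ≤ y → y ≤ d → f y ≤ f x := by
      refine chain_anti (fun i hi1 hi2 => hstep i hi1 (by omega) ?_)
      intro hmem; have := huniq i hmem; omega
    have hanti2 : ∀ x y, d + 1 ≤ x → x ≤ y → y ≤ n → f y ≤ f x := by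
      refine chain_anti (fun i hi1 hi2 => hstep i (by omega) hi2 ?_)
      intro hmem; have := huniq i hmem; omega
    refine ⟨d, hd1, by omega, ?_, ?_⟩
    · intro x hx1 hx2
      have h1 : f x ≤ f 1 := hanti1 1 x le_rfl hx1 hx2
      have h2 : 1 ≤ f x := hf.one_le hx1 (by omega)
      omega
    · intro x y hx hxy hyn
      exact hanti2 x y (by omega) hxy hyn

end Aux
section Comp

variable {n r : ℕ} {f g : ℕ → ℕ}

lemma compAA (hf : IsTrans n f) (hdf : Decreasing n f) (hg : IsTrans n g)
    (hdg : Decreasing n g) (hn : 1 ≤ n) (hSf : ShA n f) (hSg : ShA n g) :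
    ShA n (comp f g) := by
  obtain ⟨cf, hcfn, hfm, hft⟩ := hSf
  obtain ⟨cg, hcgn, hgm, hgt⟩ := hSg
  have hg1 : g 1 = 1 := Dn_one hg hdg hn
  set S : Set ℕ := {x | 1 ≤ x ∧ x ≤ cf ∧ f x ≤ cg} with hS
  have hbdd : BddAbove S := ⟨cf, fun x hx => hx.2.1⟩
  set c := sSup S with hc
  have hub : ∀ x ∈ S, x ≤ c := fun x hx => le_csSup hbdd hx
  have hcle : c ≤ n := csSup_le' (fun x hx => le_trans hx.2.1 hcfn)
  refine ⟨c, hcle, ?_, ?_⟩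
  · intro x y hx1 hxy hyc
    have hSne : S.Nonempty := by
      by_contra hemp
      rw [Set.not_nonempty_iff_eq_empty] at hemp
      rw [hc, hemp] at hyc
      simp at hyc
      omega
    have hcS : c ∈ S := Nat.sSup_mem hSne hbdd
    obtain ⟨hc1, hccf, hfc⟩ := hcS
    have hfy : f y ≤ cg := le_trans (hfm y c (by omega) hyc hccf) hfc
    have hfx : f x ≤ f y := hfm x y hx1 hxy (by omega)
    exact hgm (f x) (f y) (hf.one_le hx1 (by omega)) hfx hfy
  · intro x hcx hxn
    have hxS : x ∉ S := fun h => by have := hub x h; omega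
    rw [hS] at hxS
    simp only [Set.mem_setOf_eq, not_and, not_le] at hxS
    by_cases h1 : x ≤ cf
    · have : cg < f x := hxS (by omega) h1
      exact hgt (f x) this (hf.le_n (by omega) hxn)
    · have : f x = 1 := hft x (by omega) hxn
      rw [comp, this, hg1]

lemma compBA (hf : IsTrans n f) (hdf : Decreasing n f) (hg : IsTrans n g)
    (hdg : Decreasing n g) (hn : 1 ≤ n) (hSf : ShB n f) (hSg : ShA n g) :
    ShB n (comp f g) := by
  obtain ⟨qf, hqf1, hqfn, hfo, hfa⟩ := hSf
  obtain ⟨cg, hcgn, hgm, hgt⟩ := hSg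
  have hg1 : g 1 = 1 := Dn_one hg hdg hn
  set S : Set ℕ := {x | 1 ≤ x ∧ x ≤ n ∧ (x ≤ qf ∨ cg < f x)} with hS
  have hbdd : BddAbove S := ⟨n, fun x hx => hx.2.1⟩
  have hSne : S.Nonempty := ⟨qf, hqf1, hqfn, Or.inl le_rfl⟩
  set q := sSup S with hq
  have hqS : q ∈ S := Nat.sSup_mem hSne hbdd
  have hub : ∀ x ∈ S, x ≤ q := fun x hx => le_csSup hbdd hx
  refine ⟨q, hqS.1, hqS.2.1, ?_, ?_⟩
  · intro x hx1 hxq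
    have hxn : x ≤ n := le_trans hxq hqS.2.1
    by_cases h1 : x ≤ qf
    · rw [comp, hfo x hx1 h1, hg1]
    · have hfq : cg < f q := by
        rcases hqS.2.2 with h | h
        · omega
        · exact h
      have : f q ≤ f x := hfa x q (by omega) hxq hqS.2.1
      exact hgt (f x) (by omega) (hf.le_n hx1 hxn)
  · intro x y hqx hxy hyn
    have hxn : x ≤ n := by omega
    have hx1 : 1 ≤ x := by have := hqS.1; omega
    have hxS : x ∉ S := fun h => by have := hub x h; omega
    have hyS : y ∉ S := fun h => by have := hub y h; omega
    rw [hS] at hxS hyS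
    simp only [Set.mem_setOf_eq, not_and, not_or, not_lt, not_le] at hxS hyS
    obtain ⟨hxqf, hfxcg⟩ := hxS hx1 hxn
    obtain ⟨hyqf, hfycg⟩ := hyS (by omega) hyn
    have hfyx : f y ≤ f x := hfa x y (by omega) hxy hyn
    exact hgm (f y) (f x) (hf.one_le (by omega) hyn) hfyx hfxcg

lemma compAB (hf : IsTrans n f) (hdf : Decreasing n f) (hg : IsTrans n g)
    (hdg : Decreasing n g) (hn : 1 ≤ n) (hSf : ShA n f) (hSg : ShB n g) :
    ShB n (comp f g) := by
  obtain ⟨cf, hcfn, hfm, hft⟩ := hSf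
  obtain ⟨qg, hqg1, hqgn, hgo, hga⟩ := hSg
  have hf1 : f 1 = 1 := Dn_one hf hdf hn
  have hgone : g 1 = 1 := hgo 1 le_rfl hqg1
  set S : Set ℕ := {x | 1 ≤ x ∧ x ≤ cf ∧ f x ≤ qg} with hS
  rcases Set.eq_empty_or_nonempty S with hSe | hSne
  · -- then cf = 0, f ≡ 1 on [1,n], comp ≡ 1
    have hall : ∀ x, 1 ≤ x → x ≤ n → comp f g x = 1 := by
      intro x hx1 hxn
      by_cases h1 : x ≤ cf
      · exact absurd (show (1:ℕ) ∈ S from ⟨le_rfl, by omega, by rw [hf1]; exact hqg1⟩)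
          (by rw [hSe]; simp)
      · rw [comp, hft x (by omega) hxn, hgone]
    refine ⟨n, hn, le_rfl, hall, fun x y hx hxy hyn => by omega⟩
  · have hbdd : BddAbove S := ⟨cf, fun x hx => hx.2.1⟩
    set q := sSup S with hq
    have hqS : q ∈ S := Nat.sSup_mem hSne hbdd
    have hub : ∀ x ∈ S, x ≤ q := fun x hx => le_csSup hbdd hx
    refine ⟨q, hqS.1, le_trans hqS.2.1 hcfn, ?_, ?_⟩
    · intro x hx1 hxq
      have hxn : x ≤ n := le_trans (le_trans hxq hqS.2.1) hcfn
      have hfx : f x ≤ qg := le_trans (hfm x q hx1 hxq hqS.2.1) hqS.2.2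
      exact hgo (f x) (hf.one_le hx1 hxn) hfx
    · intro x y hqx hxy hyn
      have hx1 : 1 ≤ x := by have := hqS.1; omega
      have hxn : x ≤ n := by omega
      by_cases h1 : cf < x
      · -- f x = 1, h x = 1 ; and y > cf too
        have hy : comp f g y = 1 := by rw [comp, hft y (by omega) hyn, hgone]
        have hx : comp f g x = 1 := by rw [comp, hft x h1 hxn, hgone]
        omega
      · have hxcf : x ≤ cf := by omega
        have hxS : x ∉ S := fun h => by have := hub x h; omega
        rw [hS] at hxS
        simp only [Set.mem_setOf_eq, not_and, not_le] at hxS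
        have hfxq : qg < f x := hxS hx1 hxcf
        by_cases h2 : y ≤ cf
        · have hfxy : f x ≤ f y := hfm x y hx1 hxy h2
          exact hga (f x) (f y) hfxq hfxy (hf.le_n (by omega) hyn)
        · have hy : comp f g y = 1 := by rw [comp, hft y (by omega) hyn, hgone]
          have : 1 ≤ comp f g x := hg.one_le (hf.one_le hx1 hxn) (hf.le_n hx1 hxn)
          omega

lemma compBB (hf : IsTrans n f) (hdf : Decreasing n f) (hg : IsTrans n g)
    (hdg : Decreasing n g) (hn : 1 ≤ n) (hSf : ShB n f) (hSg : ShB n g) :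
    ShA n (comp f g) := by
  obtain ⟨qf, hqf1, hqfn, hfo, hfa⟩ := hSf
  obtain ⟨qg, hqg1, hqgn, hgo, hga⟩ := hSg
  have hgone : g 1 = 1 := hgo 1 le_rfl hqg1
  set S : Set ℕ := {x | 1 ≤ x ∧ x ≤ n ∧ (x ≤ qf ∨ qg < f x)} with hS
  have hbdd : BddAbove S := ⟨n, fun x hx => hx.2.1⟩
  have hSne : S.Nonempty := ⟨qf, hqf1, hqfn, Or.inl le_rfl⟩
  set c := sSup S with hc
  have hcS : c ∈ S := Nat.sSup_mem hSne hbdd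
  have hub : ∀ x ∈ S, x ≤ c := fun x hx => le_csSup hbdd hx
  refine ⟨c, hcS.2.1, ?_, ?_⟩
  · intro x y hx1 hxy hyc
    have hyn : y ≤ n := le_trans hyc hcS.2.1
    by_cases h1 : y ≤ qf
    · rw [comp, comp, hfo x hx1 (by omega), hfo y (by omega) h1]
    · have hfc : qg < f c := by
        rcases hcS.2.2 with h | h
        · omega
        · exact h
      have hfyc : f c ≤ f y := hfa y c (by omega) hyc hcS.2.1
      by_cases h2 : x ≤ qf
      · rw [comp, hfo x hx1 h2, hgone]
        exact hg.one_le (hf.one_le (by omega) hyn) (hf.le_n (by omega) hyn)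
      · have hfxy : f y ≤ f x := hfa x y (by omega) hxy hyn
        exact hga (f y) (f x) (by omega) hfxy (hf.le_n (by omega) (by omega : x ≤ n))
  · intro x hcx hxn
    have hx1 : 1 ≤ x := by have := hcS.1; omega
    have hxS : x ∉ S := fun h => by have := hub x h; omega
    rw [hS] at hxS
    simp only [Set.mem_setOf_eq, not_and, not_or, not_lt, not_le] at hxS
    obtain ⟨hxqf, hfxqg⟩ := hxS hx1 hxn
    exact hgo (f x) (hf.one_le hx1 hxn) hfxqg

lemma comp_mem_ORDr (hn : 1 ≤ n) (hf : f ∈ ORDr n r) (hg : g ∈ ORDr n r) :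
    comp f g ∈ ORDr n r := by
  obtain ⟨⟨⟨hft, hfd⟩, hfor⟩, hfc⟩ := hf
  obtain ⟨⟨⟨hgt, hgd⟩, hgor⟩, hgc⟩ := hg
  have htrans := comp_isTrans hft hgt
  have hdecr := comp_decreasing hft hfd hgd
  refine ⟨⟨⟨htrans, hdecr⟩, ?_⟩, le_trans (comp_card_le hft) hfc⟩
  rcases hfor with hfC | hfA <;> rcases hgor with hgC | hgA
  · exact Or.inl ((compAA hft hfd hgt hgd hn (cyclic_shA hfC hft hfd hn)
      (cyclic_shA hgC hgt hgd hn)).cyclic htrans hdecr hn)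
  · exact Or.inr ((compAB hft hfd hgt hgd hn (cyclic_shA hfC hft hfd hn)
      (anticyclic_shB hgA hgt hgd hn)).anticyclic htrans hdecr hn)
  · exact Or.inr ((compBA hft hfd hgt hgd hn (anticyclic_shB hfA hft hfd hn)
      (cyclic_shA hgC hgt hgd hn)).anticyclic htrans hdecr hn)
  · exact Or.inl ((compBB hft hfd hgt hgd hn (anticyclic_shB hfA hft hfd hn)
      (anticyclic_shB hgA hgt hgd hn)).cyclic htrans hdecr hn)

end Comp
section Gen

variable {n r : ℕ} {f : ℕ → ℕ}

lemma OPDr_subset_ORDr : OPDr n r ⊆ ORDr n r := by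
  rintro f ⟨⟨hDn, hC⟩, hcard⟩
  exact ⟨⟨hDn, Or.inl hC⟩, hcard⟩

lemma rhat_facts (hn : 4 ≤ n) (hr : 3 ≤ r) :
    3 ≤ rhat n r ∧ rhat n r ≤ r ∧ 2 * rhat n r ≤ n + 2 := by
  unfold rhat
  refine ⟨le_min hr ?_, min_le_left _ _, ?_⟩
  · omega
  · have h1 : min r ((n + 2) / 2) ≤ (n + 2) / 2 := min_le_right _ _
    omega

/-- Membership of the λ-generators in `ORDr`. -/
lemma lam_mem_ORDr (hn : 4 ≤ n) (hρ3 : 3 ≤ rhat n r) (hρr : rhat n r ≤ r)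
    {m : ℕ} (hm3 : 3 ≤ m) (hmn : m ≤ n - 1) :
    lam n (rhat n r) m ∈ ORDr n r := by
  set ρ := rhat n r with hρ
  set e := min (2 * m - (m - ρ) - 2) n with he
  have hmn' : m + 1 ≤ n := by omega
  have hme : m ≤ e := by omega
  have hval : ∀ x, m ≤ x → x ≤ e → lam n ρ m x = 2 * m - x := by
    intro x hx1 hx2
    rw [lam]
    rw [if_neg (by omega), if_neg (by omega), if_pos (by omega)]
  have hone : ∀ x, 1 ≤ x → x < m → lam n ρ m x = 1 := by
    intro x hx1 hx2
    rw [lam, if_neg (by omega), if_pos hx2]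
  have htail : ∀ x, e < x → x ≤ n → lam n ρ m x = 1 := by
    intro x hx1 hx2
    rw [lam, if_neg (by omega), if_neg (by omega), if_neg (by omega)]
  have htrans : IsTrans n (lam n ρ m) := by
    constructor
    · intro x h1 h2
      by_cases hc1 : x < m
      · rw [hone x h1 hc1]; omega
      by_cases hc2 : x ≤ e
      · rw [hval x (by omega) hc2]; omega
      · rw [htail x (by omega) h2]; omega
    · intro x hx
      rw [lam, if_pos hx]
  have hdecr : Decreasing n (lam n ρ m) := by
    intro x h1 h2
    by_cases hc1 : x < m
    · rw [hone x h1 hc1]; omega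
    by_cases hc2 : x ≤ e
    · rw [hval x (by omega) hc2]; omega
    · rw [htail x (by omega) h2]; omega
  have hShB : ShB n (lam n ρ m) := by
    refine ⟨m - 1, by omega, by omega, ?_, ?_⟩
    · intro x hx1 hx2
      exact hone x hx1 (by omega)
    · intro x y hx hxy hyn
      by_cases hc2 : y ≤ e
      · rw [hval x (by omega) (by omega), hval y (by omega) hc2]
        omega
      · rw [htail y (by omega) hyn]
        by_cases hc3 : x ≤ e
        · rw [hval x (by omega) hc3]; omega
        · rw [htail x (by omega) (by omega)]
  have hcard : (im n (lam n ρ m)).card ≤ r := by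
    have hsub : im n (lam n ρ m) ⊆ insert 1 ((Finset.Icc m e).image (fun x => 2 * m - x)) := by
      intro v hv
      rw [im, Finset.mem_image] at hv
      obtain ⟨x, hx, hfx⟩ := hv
      rw [Finset.mem_Icc] at hx
      by_cases hc1 : x < m
      · rw [hone x hx.1 hc1] at hfx
        simp [← hfx]
      by_cases hc2 : x ≤ e
      · rw [hval x (by omega) hc2] at hfx
        exact Finset.mem_insert_of_mem (Finset.mem_image.2 ⟨x, Finset.mem_Icc.2 ⟨by omega, hc2⟩, hfx⟩)
      · rw [htail x (by omega) hx.2] at hfx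
        simp [← hfx]
    calc (im n (lam n ρ m)).card ≤ _ := Finset.card_le_card hsub
      _ ≤ ((Finset.Icc m e).image (fun x => 2 * m - x)).card + 1 := Finset.card_insert_le _ _
      _ ≤ (Finset.Icc m e).card + 1 := by
          have := Finset.card_image_le (s := Finset.Icc m e) (f := fun x => 2 * m - x)
          omega
      _ ≤ r := by rw [Nat.card_Icc]; omega
  exact ⟨⟨⟨htrans, hdecr⟩, Or.inr (hShB.anticyclic htrans hdecr (by omega))⟩, hcard⟩

end Gen
section Decomp

variable {n r : ℕ} {f : ℕ → ℕ}

lemma decompose (hn : 4 ≤ n) (hr : 3 ≤ r)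
    (hft : IsTrans n f) (hfd : Decreasing n f) (hA : AntiCyclic n f) (hnc : ¬ Cyclic n f)
    (hcard : (im n f).card ≤ r) :
    ∃ γ δ m, γ ∈ OPDr n r ∧ δ ∈ OPDr n r ∧ 3 ≤ m ∧ m ≤ n - 1 ∧
      f = comp (comp γ (lam n (rhat n r) m)) δ := by
  obtain ⟨hρ3, hρr, hρn⟩ := rhat_facts hn hr
  set ρ := rhat n r with hρ
  have hn1 : 1 ≤ n := by omega
  have hf1 : f 1 = 1 := Dn_one hft hfd hn1
  obtain ⟨q, hq1, hqn, hq_one, hq_anti⟩ := anticyclic_shB hA hft hfd hn1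
  -- the set of points with value ≥ 2
  set S2 : Set ℕ := {x | 1 ≤ x ∧ x ≤ n ∧ 2 ≤ f x} with hS2
  have hS2ne : S2.Nonempty := by
    by_contra hemp
    rw [Set.not_nonempty_iff_eq_empty] at hemp
    apply hnc
    have hall : ∀ x, 1 ≤ x → x ≤ n → f x = 1 := by
      intro x h1 h2
      have hx : x ∉ S2 := by rw [hemp]; simp
      rw [hS2] at hx
      simp only [Set.mem_setOf_eq, not_and, not_le] at hx
      have h3 := hx h1 h2
      have h4 := hft.one_le h1 h2
      omega
    refine ShA.cyclic ⟨n, le_rfl, ?_, fun x h1 h2 => by omega⟩ hft hfd hn1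
    intro x y h1 hxy h2
    rw [hall x h1 (by omega), hall y (by omega) h2]
  have hbdd : BddAbove S2 := ⟨n, fun x hx => hx.2.1⟩
  set m := sInf S2 with hm
  set n' := sSup S2 with hn'
  have hm_mem : m ∈ S2 := Nat.sInf_mem hS2ne
  have hn'_mem : n' ∈ S2 := Nat.sSup_mem hS2ne hbdd
  obtain ⟨hm1, hmn, hfm2⟩ := hm_mem
  obtain ⟨hn'1, hn'n, hfn'2⟩ := hn'_mem
  have hmn' : m ≤ n' := le_csSup hbdd (Nat.sInf_mem hS2ne)
  have h_before : ∀ x, 1 ≤ x → x < m → f x = 1 := by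
    intro x h1 h2
    have hx : x ∉ S2 := fun h => by have := Nat.sInf_le h; omega
    rw [hS2] at hx
    simp only [Set.mem_setOf_eq, not_and, not_le] at hx
    have h3 := hx h1 (by omega)
    have h4 := hft.one_le h1 (by omega)
    omega
  have h_after : ∀ x, n' < x → x ≤ n → f x = 1 := by
    intro x h1 h2
    have hx : x ∉ S2 := fun h => by have := le_csSup hbdd h; omega
    rw [hS2] at hx
    simp only [Set.mem_setOf_eq, not_and, not_le] at hx
    have h3 := hx (by omega) h2
    have h4 := hft.one_le (by omega) h2
    omega
  have hqm : q < m := by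
    by_contra hc
    have := hq_one m hm1 (by omega)
    omega
  have hanti : ∀ x y, m ≤ x → x ≤ y → y ≤ n → f y ≤ f x := by
    intro x y h1 h2 h3
    exact hq_anti x y (by omega) h2 h3
  -- the distinct-value counting function
  set I : ℕ → ℕ := fun x => ((Finset.Icc m x).image f).card with hI
  have hI_m : I m = 1 := by
    rw [hI]; simp
  have hI_mono : ∀ x y, x ≤ y → I x ≤ I y := by
    intro x y h
    exact Finset.card_le_card (Finset.image_subset_image (Finset.Icc_subset_Icc_right h))
  have hI_pos : ∀ x, m ≤ x → 1 ≤ I x := by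
    intro x h
    rw [hI]
    refine Finset.card_pos.2 ⟨f m, Finset.mem_image.2 ⟨m, Finset.mem_Icc.2 ⟨le_rfl, h⟩, rfl⟩⟩
  have hI_le : ∀ x, I x ≤ x + 1 - m := by
    intro x
    calc I x ≤ (Finset.Icc m x).card := Finset.card_image_le
      _ = x + 1 - m := Nat.card_Icc m x
  have hIcc_succ : ∀ x, m ≤ x → Finset.Icc m (x + 1) = insert (x + 1) (Finset.Icc m x) := by
    intro x hx
    ext z; simp only [Finset.mem_Icc, Finset.mem_insert]; omega
  have hI_succ_le : ∀ x, m ≤ x → I (x + 1) ≤ I x + 1 := by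
    intro x hx
    rw [hI]
    simp only []
    rw [hIcc_succ x hx, Finset.image_insert]
    exact Finset.card_insert_le _ _
  have hI_succ_eq : ∀ x, m ≤ x → f (x + 1) = f x → I (x + 1) = I x := by
    intro x hx hfx
    rw [hI]
    simp only []
    rw [hIcc_succ x hx, Finset.image_insert, hfx,
      Finset.insert_eq_self.2 (Finset.mem_image.2 ⟨x, Finset.mem_Icc.2 ⟨hx, le_rfl⟩, rfl⟩)]
  have hfI_eq : ∀ x y, m ≤ x → x ≤ y → y ≤ n' → I x = I y → f x = f y := by
    intro x y h1 h2 h3 h4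
    by_contra hne
    have hlt : f y < f x := by
      have := hanti x y h1 h2 (by omega)
      omega
    have hss : (Finset.Icc m x).image f ⊂ (Finset.Icc m y).image f := by
      refine ⟨Finset.image_subset_image (Finset.Icc_subset_Icc_right h2), ?_⟩
      intro hsub
      have hfy : f y ∈ (Finset.Icc m x).image f :=
        hsub (Finset.mem_image.2 ⟨y, Finset.mem_Icc.2 ⟨by omega, le_rfl⟩, rfl⟩)
      rw [Finset.mem_image] at hfy
      obtain ⟨z, hz, hfz⟩ := hfy
      rw [Finset.mem_Icc] at hz
      have : f x ≤ f z := hanti z x hz.1 hz.2 (by omega)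
      omega
    have := Finset.card_lt_card hss
    rw [hI] at h4
    simp only [] at h4
    omega
  set s := I n' with hs
  have hs1 : 1 ≤ s := hI_pos n' hmn'
  have hfI_bound : ∀ x, m ≤ x → x ≤ n' → f x + I x ≤ m + 1 := by
    intro x hx
    induction x, hx using Nat.le_induction with
    | base => intro _; have := hfd m hm1 hmn; rw [hI_m]; omega
    | succ x hx ih =>
      intro hxn'
      have ih' := ih (by omega)
      have hstep := hI_succ_le x hx
      have hf2 : f (x + 1) ≤ f x := hanti x (x + 1) hx (by omega) (by omega)
      rcases eq_or_lt_of_le hf2 with heq | hlt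
      · rw [hI_succ_eq x hx heq, heq]; omega
      · omega
  have hs2 : 2 ≤ s := by
    by_contra hc
    have hseq : s = 1 := by omega
    apply hnc
    have hconst : ∀ x, m ≤ x → x ≤ n' → f x = f m := by
      intro x h1 h2
      have e1 : I x = 1 := by
        have := hI_pos x h1
        have := hI_mono x n' h2
        omega
      exact (hfI_eq m x le_rfl h1 h2 (by omega)).symm
    refine ShA.cyclic ⟨n', by omega, ?_, h_after⟩ hft hfd hn1
    intro x y h1 hxy h2
    by_cases hc1 : y < m
    · rw [h_before x h1 (by omega), h_before y (by omega) hc1]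
    by_cases hc2 : x < m
    · rw [h_before x h1 hc2]
      exact hft.one_le (by omega) (by omega)
    · rw [hconst x (by omega) (by omega), hconst y (by omega) h2]
  have him : im n f = insert 1 ((Finset.Icc m n').image f) := by
    ext v
    rw [im, Finset.mem_insert, Finset.mem_image, Finset.mem_image]
    constructor
    · rintro ⟨x, hx, hfx⟩
      rw [Finset.mem_Icc] at hx
      by_cases hc1 : x < m
      · left; rw [← hfx, h_before x hx.1 hc1]
      by_cases hc2 : x ≤ n'
      · right; exact ⟨x, Finset.mem_Icc.2 ⟨by omega, hc2⟩, hfx⟩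
      · left; rw [← hfx, h_after x (by omega) hx.2]
    · rintro (hv | ⟨x, hx, hfx⟩)
      · exact ⟨1, Finset.mem_Icc.2 ⟨le_rfl, hn1⟩, by rw [hf1, hv]⟩
      · rw [Finset.mem_Icc] at hx
        exact ⟨x, Finset.mem_Icc.2 ⟨by omega, by omega⟩, hfx⟩
  have h1nin : 1 ∉ (Finset.Icc m n').image f := by
    rw [Finset.mem_image]
    rintro ⟨z, hz, hfz⟩
    rw [Finset.mem_Icc] at hz
    have := hanti z n' hz.1 hz.2 (by omega)
    omega
  have hcard_im : (im n f).card = s + 1 := by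
    rw [him, Finset.card_insert_of_notMem h1nin, hs, hI]
  have hsr : s + 1 ≤ r := by omega
  have hsm : s + 1 ≤ m := by
    have := hfI_bound n' hmn' le_rfl
    omega
  have hsn' : s ≤ n' + 1 - m := by rw [hs]; exact hI_le n'
  have hsρ : s + 1 ≤ ρ := by
    have h2s : 2 * (s + 1) ≤ n + 2 := by omega
    have : s + 1 ≤ (n + 2) / 2 := by omega
    rw [hρ, rhat]
    omega
  have hm3 : 3 ≤ m := by omega
  have hmn1 : m + 1 ≤ n := by
    have hneq : m ≠ n' := by
      intro h
      rw [hs, ← h, hI_m] at hs1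
      rw [hs, ← h, hI_m] at hs2
      omega
    omega
  -- the three factors
  set γ : ℕ → ℕ := fun x =>
    if ¬(1 ≤ x ∧ x ≤ n) then x else if x < m then 1 else if n' < x then 1 else m - 1 + I x
    with hγdef
  set x0 : ℕ → ℕ := fun y => sInf {x | m ≤ x ∧ x ≤ n' ∧ m + 1 - y ≤ I x} with hx0def
  set δ : ℕ → ℕ := fun y =>
    if ¬(1 ≤ y ∧ y ≤ n) then y else if m ≤ y then f m else if y + s ≤ m then 1 else f (x0 y)
    with hδdef
  have hγ_one : ∀ x, 1 ≤ x → x < m → γ x = 1 := by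
    intro x h1 h2
    simp only [hγdef]
    rw [if_neg (by omega), if_pos h2]
  have hγ_mid : ∀ x, m ≤ x → x ≤ n' → γ x = m - 1 + I x := by
    intro x h1 h2
    simp only [hγdef]
    rw [if_neg (by omega), if_neg (by omega), if_neg (by omega)]
  have hγ_tail : ∀ x, n' < x → x ≤ n → γ x = 1 := by
    intro x h1 h2
    simp only [hγdef]
    rw [if_neg (by omega), if_neg (by omega), if_pos h1]
  have hIs : ∀ x, m ≤ x → x ≤ n' → 1 ≤ I x ∧ I x ≤ s := by
    intro x h1 h2
    exact ⟨hI_pos x h1, hI_mono x n' h2⟩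
  have hx0_mem : ∀ y, m < y + s → m ≤ x0 y ∧ x0 y ≤ n' ∧ m + 1 - y ≤ I (x0 y) := by
    intro y hy
    exact Nat.sInf_mem (⟨n', hmn', le_rfl, by omega⟩ :
      {x | m ≤ x ∧ x ≤ n' ∧ m + 1 - y ≤ I x}.Nonempty)
  have hx0_le : ∀ y x, m ≤ x → x ≤ n' → m + 1 - y ≤ I x → x0 y ≤ x := by
    intro y x h1 h2 h3
    exact Nat.sInf_le ⟨h1, h2, h3⟩
  have hδ_hi : ∀ y, m ≤ y → y ≤ n → δ y = f m := by
    intro y h1 h2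
    simp only [hδdef]
    rw [if_neg (by omega), if_pos h1]
  have hδ_lo : ∀ y, 1 ≤ y → y + s ≤ m → δ y = 1 := by
    intro y h1 h2
    simp only [hδdef]
    rw [if_neg (by omega), if_neg (by omega), if_pos h2]
  have hδ_mid : ∀ y, y < m → m < y + s → δ y = f (x0 y) := by
    intro y h1 h2
    simp only [hδdef]
    rw [if_neg (by omega), if_neg (by omega), if_neg (by omega)]
  -- γ is in OPDr
  have hγ_trans : IsTrans n γ := by
    constructor
    · intro x h1 h2
      by_cases hc1 : x < m
      · rw [hγ_one x h1 hc1]; omega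
      by_cases hc2 : x ≤ n'
      · rw [hγ_mid x (by omega) hc2]
        have := hIs x (by omega) hc2
        omega
      · rw [hγ_tail x (by omega) h2]; omega
    · intro x hx
      simp only [hγdef]; rw [if_pos hx]
  have hγ_decr : Decreasing n γ := by
    intro x h1 h2
    by_cases hc1 : x < m
    · rw [hγ_one x h1 hc1]; omega
    by_cases hc2 : x ≤ n'
    · rw [hγ_mid x (by omega) hc2]
      have := hI_le x
      omega
    · rw [hγ_tail x (by omega) h2]; omega
  have hγ_shA : ShA n γ := by
    refine ⟨n', by omega, ?_, hγ_tail⟩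
    intro x y h1 hxy h2
    by_cases hc1 : y < m
    · rw [hγ_one x h1 (by omega), hγ_one y (by omega) hc1]
    by_cases hc2 : x < m
    · rw [hγ_one x h1 hc2, hγ_mid y (by omega) h2]
      have := hIs y (by omega) h2
      omega
    · rw [hγ_mid x (by omega) (by omega), hγ_mid y (by omega) h2]
      have := hI_mono x y hxy
      omega
  have hγ_card : (im n γ).card ≤ r := by
    have hsub : im n γ ⊆ insert 1 (Finset.Icc m (m - 1 + s)) := by
      intro v hv
      rw [im, Finset.mem_image] at hv
      obtain ⟨x, hx, hfx⟩ := hv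
      rw [Finset.mem_Icc] at hx
      by_cases hc1 : x < m
      · rw [hγ_one x hx.1 hc1] at hfx; simp [← hfx]
      by_cases hc2 : x ≤ n'
      · rw [hγ_mid x (by omega) hc2] at hfx
        have := hIs x (by omega) hc2
        exact Finset.mem_insert_of_mem (Finset.mem_Icc.2 (by omega))
      · rw [hγ_tail x (by omega) hx.2] at hfx; simp [← hfx]
    calc (im n γ).card ≤ _ := Finset.card_le_card hsub
      _ ≤ (Finset.Icc m (m - 1 + s)).card + 1 := Finset.card_insert_le _ _
      _ ≤ r := by rw [Nat.card_Icc]; omega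
  have hγ_mem : γ ∈ OPDr n r :=
    ⟨⟨⟨hγ_trans, hγ_decr⟩, hγ_shA.cyclic hγ_trans hγ_decr hn1⟩, hγ_card⟩
  -- δ is in OPDr
  have hδ_trans : IsTrans n δ := by
    constructor
    · intro y h1 h2
      by_cases hc1 : m ≤ y
      · rw [hδ_hi y hc1 h2]
        exact ⟨hft.one_le hm1 hmn, hft.le_n hm1 hmn⟩
      by_cases hc2 : y + s ≤ m
      · rw [hδ_lo y h1 hc2]; omega
      · rw [hδ_mid y (by omega) (by omega)]
        have hmem := hx0_mem y (by omega)
        exact ⟨hft.one_le (by omega) (by omega), hft.le_n (by omega) (by omega)⟩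
    · intro y hy
      simp only [hδdef]; rw [if_pos hy]
  have hδ_decr : Decreasing n δ := by
    intro y h1 h2
    by_cases hc1 : m ≤ y
    · rw [hδ_hi y hc1 h2]
      have := hfd m hm1 hmn
      omega
    by_cases hc2 : y + s ≤ m
    · rw [hδ_lo y h1 hc2]; omega
    · rw [hδ_mid y (by omega) (by omega)]
      have hmem := hx0_mem y (by omega)
      have := hfI_bound (x0 y) hmem.1 hmem.2.1
      omega
  have hδ_shA : ShA n δ := by
    refine ⟨n, le_rfl, ?_, fun x h1 h2 => by omega⟩
    intro x y h1 hxy h2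
    by_cases hc1 : m ≤ y
    · rw [hδ_hi y hc1 h2]
      by_cases hd1 : m ≤ x
      · rw [hδ_hi x hd1 (by omega)]
      by_cases hd2 : x + s ≤ m
      · rw [hδ_lo x h1 hd2]
        exact hft.one_le hm1 hmn
      · rw [hδ_mid x (by omega) (by omega)]
        have hmem := hx0_mem x (by omega)
        exact hanti m (x0 x) le_rfl hmem.1 (by omega)
    · by_cases hd2 : x + s ≤ m
      · rw [hδ_lo x h1 hd2]
        by_cases he1 : y + s ≤ m
        · rw [hδ_lo y (by omega) he1]
        · rw [hδ_mid y (by omega) (by omega)]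
          have hmem := hx0_mem y (by omega)
          exact hft.one_le (by omega) (by omega)
      · rw [hδ_mid x (by omega) (by omega), hδ_mid y (by omega) (by omega)]
        have hmemx := hx0_mem x (by omega)
        have hmemy := hx0_mem y (by omega)
        have hle : x0 y ≤ x0 x := hx0_le y (x0 x) hmemx.1 hmemx.2.1 (by omega)
        exact hanti (x0 y) (x0 x) hmemy.1 hle (by omega)
  have hδ_card : (im n δ).card ≤ r := by
    have hsub : im n δ ⊆ im n f := by
      intro v hv
      rw [im, Finset.mem_image] at hv
      obtain ⟨y, hy, hfy⟩ := hv
      rw [Finset.mem_Icc] at hy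
      rw [im, Finset.mem_image]
      by_cases hc1 : m ≤ y
      · rw [hδ_hi y hc1 hy.2] at hfy
        exact ⟨m, Finset.mem_Icc.2 ⟨hm1, hmn⟩, hfy⟩
      by_cases hc2 : y + s ≤ m
      · rw [hδ_lo y hy.1 hc2] at hfy
        exact ⟨1, Finset.mem_Icc.2 ⟨le_rfl, hn1⟩, by rw [hf1, hfy]⟩
      · rw [hδ_mid y (by omega) (by omega)] at hfy
        have hmem := hx0_mem y (by omega)
        exact ⟨x0 y, Finset.mem_Icc.2 ⟨by omega, by omega⟩, hfy⟩
    exact le_trans (Finset.card_le_card hsub) hcard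
  have hδ_mem : δ ∈ OPDr n r :=
    ⟨⟨⟨hδ_trans, hδ_decr⟩, hδ_shA.cyclic hδ_trans hδ_decr hn1⟩, hδ_card⟩
  -- the identity
  refine ⟨γ, δ, m, hγ_mem, hδ_mem, hm3, by omega, ?_⟩
  have hδ1 : δ 1 = 1 := hδ_lo 1 le_rfl (by omega)
  have hlam1 : lam n ρ m 1 = 1 := by
    rw [lam, if_neg (by omega), if_pos (by omega)]
  funext x
  rw [comp, comp]
  by_cases hx : 1 ≤ x ∧ x ≤ n
  · by_cases hc1 : x < m
    · rw [hγ_one x hx.1 hc1, hlam1, hδ1, h_before x hx.1 hc1]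
    by_cases hc2 : x ≤ n'
    · rw [hγ_mid x (by omega) hc2]
      have hIx := hIs x (by omega) hc2
      have hwn : m - 1 + I x ≤ n := by omega
      have hlamw : lam n ρ m (m - 1 + I x) = m + 1 - I x := by
        rw [lam, if_neg (by omega), if_neg (by omega), if_pos (le_min (by omega) hwn)]
        omega
      rw [hlamw]
      by_cases hc3 : I x = 1
      · rw [hδ_hi (m + 1 - I x) (by omega) (by omega)]
        exact (hfI_eq m x le_rfl (by omega) hc2 (by omega)).symm
      · rw [hδ_mid (m + 1 - I x) (by omega) (by omega)]
        have hxT : m + 1 - (m + 1 - I x) ≤ I x := by omega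
        have hle : x0 (m + 1 - I x) ≤ x := hx0_le _ x (by omega) hc2 hxT
        have hmem := hx0_mem (m + 1 - I x) (by omega)
        have hIeq : I (x0 (m + 1 - I x)) = I x := by
          have := hI_mono (x0 (m + 1 - I x)) x hle
          omega
        exact (hfI_eq (x0 (m + 1 - I x)) x hmem.1 hle hc2 hIeq).symm
    · rw [hγ_tail x (by omega) hx.2, hlam1, hδ1, h_after x (by omega) hx.2]
  · rw [hγ_trans.2 x hx]
    have hlamx : lam n ρ m x = x := by rw [lam, if_pos hx]
    rw [hlamx, hδ_trans.2 x hx]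
    exact hft.2 x hx

end Decomp
theorem ordr_generated (n r : ℕ) (hn : 4 ≤ n) (hr : 3 ≤ r) (hrn : r ≤ n - 1) :
    ∀ f, gen (OPDr n r ∪ Gset n (rhat n r)) f ↔ f ∈ ORDr n r := by
  intro f
  constructor
  · intro h
    induction h with
    | base hf =>
      rcases hf with hf | hf
      · exact OPDr_subset_ORDr hf
      · obtain ⟨m, hm3, hmn, rfl⟩ := hf
        obtain ⟨hρ3, hρr, _⟩ := rhat_facts hn hr
        exact lam_mem_ORDr hn hρ3 hρr hm3 hmn
    | mul hf hg ihf ihg => exact comp_mem_ORDr (by omega) ihf ihg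
  · intro hf
    obtain ⟨⟨⟨hft, hfd⟩, hor⟩, hcard⟩ := hf
    by_cases hC : Cyclic n f
    · exact gen.base (Or.inl ⟨⟨⟨hft, hfd⟩, hC⟩, hcard⟩)
    · have hA : AntiCyclic n f := by
        rcases hor with h | h
        · exact absurd h hC
        · exact h
      obtain ⟨γ, δ, m, hγ, hδ, hm3, hmn, heq⟩ := decompose hn hr hft hfd hA hC hcard
      rw [heq]
      exact gen.mul (gen.mul (gen.base (Or.inl hγ))
        (gen.base (Or.inr ⟨m, hm3, hmn, rfl⟩))) (gen.base (Or.inl hδ))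

end ORDPaper
end

section
/- For n ≥ 4 and 3 ≤ r ≤ n−1, every generating set of ORD(n,r) must contain, for each m with 3 ≤ m ≤ n−1, at least one orientation-reversing non-orientation-preserving element α with fix(α) = {1, m}. -/
open Finset

namespace ORDPaper

/-! ### Auxiliary lemmas -/

/-- Structural description of cyclic order-decreasing maps: nondecreasing up to `k`,
then constantly `1`. -/
def Pgood (n : ℕ) (f : ℕ → ℕ) : Prop :=
  ∃ k, 1 ≤ k ∧ k ≤ n ∧ (∀ x y, 1 ≤ x → x ≤ y → y ≤ k → f x ≤ f y) ∧
    (∀ x, k < x → x ≤ n → f x = 1)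

lemma Dn_one_eq {n : ℕ} {f : ℕ → ℕ} (hn : 1 ≤ n) (hf : f ∈ Dn n) : f 1 = 1 :=
  le_antisymm (hf.2 1 le_rfl hn) ((hf.1.1 1 le_rfl hn).1)

lemma mono_of_local {f : ℕ → ℕ} {a b : ℕ} (h : ∀ i, a ≤ i → i < b → f i ≤ f (i+1)) :
    ∀ x y, a ≤ x → x ≤ y → y ≤ b → f x ≤ f y := by
  intro x y hax hxy hyb
  induction y, hxy using Nat.le_induction with
  | base => exact le_rfl
  | succ y hy ih =>
      exact le_trans (ih (by omega)) (h y (le_trans hax hy) (by omega))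

lemma anti_of_local {f : ℕ → ℕ} {a b : ℕ} (h : ∀ i, a ≤ i → i < b → f (i+1) ≤ f i) :
    ∀ y, a ≤ y → y ≤ b → f y ≤ f a := by
  intro y hay hyb
  induction y, hay using Nat.le_induction with
  | base => exact le_rfl
  | succ y hy ih => exact le_trans (h y hy (by omega)) (ih (by omega))

lemma exists_ascent {f : ℕ → ℕ} {a b : ℕ} (hab : a ≤ b) (hv : f a < f b) :
    ∃ i, a ≤ i ∧ i < b ∧ f i < f (i+1) := by
  by_contra hcon
  push_neg at hcon
  exact absurd (anti_of_local hcon b hab le_rfl) (not_le.mpr hv)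

lemma cyclic_to_P {n : ℕ} {f : ℕ → ℕ} (hn : 1 ≤ n) (hf : f ∈ Dn n) (hc : Cyclic n f) :
    Pgood n f := by
  classical
  set D := (Finset.Icc 1 n).filter (fun i => nxt n f i < f i) with hD
  have hcard : D.card ≤ 1 := hc
  have hnd : ∀ i, 1 ≤ i → i < n → i ∉ D → f i ≤ f (i+1) := by
    intro i h1 h2 hiD
    by_contra hlt
    push_neg at hlt
    apply hiD
    simp only [hD, mem_filter, mem_Icc]
    refine ⟨⟨h1, h2.le⟩, ?_⟩
    rw [nxt, if_neg h2.ne]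
    exact hlt
  by_cases hDe : D = ∅
  · exact ⟨n, hn, le_rfl,
      mono_of_local (fun i h1 h2 => hnd i h1 h2 (by simp [hDe])),
      fun x hx hx' => absurd hx' (not_le.mpr hx)⟩
  · obtain ⟨k, hk⟩ := Finset.nonempty_iff_ne_empty.mpr hDe
    have huniq : ∀ i ∈ D, i = k := fun i hi =>
      Finset.card_le_one.mp hcard i hi k hk
    have hkIcc := (Finset.mem_filter.mp hk).1
    rw [mem_Icc] at hkIcc
    by_cases hkn : k = n
    · refine ⟨n, hn, le_rfl, mono_of_local (fun i h1 h2 => hnd i h1 h2 ?_), 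
        fun x hx hx' => absurd hx' (not_le.mpr hx)⟩
      intro hiD
      exact absurd (huniq i hiD) (by omega)
    · have hkltn : k < n := lt_of_le_of_ne hkIcc.2 hkn
      have hfn : f n = 1 := by
        have hnD : n ∉ D := fun hnD => absurd (huniq n hnD) (by omega)
        have : ¬ (nxt n f n < f n) := by
          intro hlt
          exact hnD (by simp only [hD, mem_filter, mem_Icc]; exact ⟨⟨hn, le_rfl⟩, hlt⟩)
        rw [nxt, if_pos rfl, Dn_one_eq hn hf] at this
        have := (hf.1.1 n hn le_rfl).1
        omega
      refine ⟨k, hkIcc.1, hkIcc.2,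
        mono_of_local (fun i h1 h2 => hnd i h1 (by omega)
          (fun hiD => absurd (huniq i hiD) (by omega))), ?_⟩
      · intro x hkx hxn
        have hmono2 : f x ≤ f n := by
          refine mono_of_local (a := k+1) (b := n) (fun i h1 h2 => hnd i (by omega) h2 ?_) x n
            (by omega) hxn le_rfl
          intro hiD
          exact absurd (huniq i hiD) (by omega)
        have := (hf.1.1 x (by omega) hxn).1
        omega

lemma P_to_cyclic {n : ℕ} {f : ℕ → ℕ} (h1 : f 1 = 1)
    (hpos : ∀ x, 1 ≤ x → x ≤ n → 1 ≤ f x) (hP : Pgood n f) : Cyclic n f := by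
  obtain ⟨k, hk1, hkn, hmono, htail⟩ := hP
  have hsub : (Finset.Icc 1 n).filter (fun i => nxt n f i < f i) ⊆ {k} := by
    intro i hi
    simp only [mem_filter, mem_Icc] at hi
    obtain ⟨⟨hi1, hin⟩, hdes⟩ := hi
    simp only [mem_singleton]
    rcases eq_or_lt_of_le hin with rfl | hlt
    · rw [nxt, if_pos rfl, h1] at hdes
      by_contra hne
      rw [htail i (by omega) (by omega)] at hdes
      omega
    · rw [nxt, if_neg hlt.ne] at hdes
      by_contra hne
      rcases lt_trichotomy i k with h | h | h
      · exact absurd (hmono i (i+1) hi1 (Nat.le_succ i) (by omega)) (not_le.mpr hdes)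
      · exact hne h
      · rw [htail i h hin] at hdes
        have := hpos (i+1) (by omega) (by omega)
        omega
  exact le_trans (Finset.card_le_card hsub) (by simp)

lemma comp_mem_Dn {n : ℕ} {f g : ℕ → ℕ} (hf : f ∈ Dn n) (hg : g ∈ Dn n) :
    comp f g ∈ Dn n := by
  refine ⟨⟨?_, ?_⟩, ?_⟩
  · intro x h1 hx
    have := hf.1.1 x h1 hx
    exact hg.1.1 _ this.1 this.2
  · intro x hx
    show g (f x) = x
    rw [hf.1.2 x hx, hg.1.2 x hx]
  · intro x h1 hx
    have hfx := hf.1.1 x h1 hx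
    exact le_trans (hg.2 _ hfx.1 hfx.2) (hf.2 x h1 hx)

lemma P_comp {n : ℕ} {f g : ℕ → ℕ} (hn : 1 ≤ n) (hf : f ∈ Dn n) (hg : g ∈ Dn n)
    (hPf : Pgood n f) (hPg : Pgood n g) : Pgood n (comp f g) := by
  obtain ⟨kf, hkf1, hkfn, hfm, hft⟩ := hPf
  obtain ⟨kg, hkg1, hkgn, hgm, hgt⟩ := hPg
  classical
  set s := (Finset.Icc 1 kf).filter (fun x => f x ≤ kg) with hs
  have h1s : 1 ∈ s := by
    simp only [hs, mem_filter, mem_Icc]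
    exact ⟨⟨le_rfl, hkf1⟩, by rw [Dn_one_eq hn hf]; exact hkg1⟩
  have hne : s.Nonempty := ⟨1, h1s⟩
  set k := s.max' hne with hk
  have hks : k ∈ s := s.max'_mem hne
  have hkIcc : 1 ≤ k ∧ k ≤ kf := by
    have := (Finset.mem_filter.mp hks).1
    rwa [mem_Icc] at this
  have hfk : f k ≤ kg := (Finset.mem_filter.mp hks).2
  refine ⟨k, hkIcc.1, le_trans hkIcc.2 hkfn, ?_, ?_⟩
  · intro x y h1x hxy hyk
    show g (f x) ≤ g (f y)
    have hfxy : f x ≤ f y := hfm x y h1x hxy (by omega)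
    have hfyk : f y ≤ kg := le_trans (hfm y k (le_trans h1x hxy) hyk (by omega)) hfk
    have h1fx : 1 ≤ f x := (hf.1.1 x h1x (by omega)).1
    exact hgm (f x) (f y) h1fx hfxy hfyk
  · intro x hkx hxn
    show g (f x) = 1
    by_cases hxkf : x ≤ kf
    · have hxs : x ∉ s := fun hmem => absurd (s.le_max' x hmem) (not_le.mpr hkx)
      have hgtkg : ¬ f x ≤ kg := by
        intro hle
        exact hxs (by simp only [hs, mem_filter, mem_Icc]; exact ⟨⟨by omega, hxkf⟩, hle⟩)
      exact hgt (f x) (by omega) ((hf.1.1 x (by omega) hxn).2)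
    · rw [hft x (by omega) hxn]
      exact Dn_one_eq hn hg

lemma cyclic_comp {n : ℕ} {f g : ℕ → ℕ} (hn : 1 ≤ n) (hf : f ∈ Dn n) (hg : g ∈ Dn n)
    (hcf : Cyclic n f) (hcg : Cyclic n g) : Cyclic n (comp f g) := by
  have hD := comp_mem_Dn hf hg
  exact P_to_cyclic (Dn_one_eq hn hD) (fun x h1 hx => (hD.1.1 x h1 hx).1)
    (P_comp hn hf hg (cyclic_to_P hn hf hcf) (cyclic_to_P hn hg hcg))

lemma anticyclic_two_fixed {n : ℕ} {f : ℕ → ℕ} (hf : f ∈ Dn n) (hac : AntiCyclic n f)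
    {x y : ℕ} (h1x : 1 < x) (hxy : x < y) (hyn : y ≤ n) (hfx : f x = x) (hfy : f y = y) :
    False := by
  have hn : 1 ≤ n := by omega
  have h1 : f 1 = 1 := Dn_one_eq hn hf
  obtain ⟨i, hai, hib, hasc⟩ := exists_ascent (f := f) (a := 1) (b := x) (by omega)
    (by rw [h1, hfx]; omega)
  obtain ⟨j, haj, hjb, hascj⟩ := exists_ascent (f := f) (a := x) (b := y) (by omega)
    (by rw [hfx, hfy]; omega)
  have hiA : i ∈ (Finset.Icc 1 n).filter (fun i => f i < nxt n f i) := by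
    simp only [mem_filter, mem_Icc]
    refine ⟨⟨hai, by omega⟩, ?_⟩
    rw [nxt, if_neg (by omega : i ≠ n)]
    exact hasc
  have hjA : j ∈ (Finset.Icc 1 n).filter (fun i => f i < nxt n f i) := by
    simp only [mem_filter, mem_Icc]
    refine ⟨⟨by omega, by omega⟩, ?_⟩
    rw [nxt, if_neg (by omega : j ≠ n)]
    exact hascj
  have hlt : 1 < ((Finset.Icc 1 n).filter (fun i => f i < nxt n f i)).card :=
    Finset.one_lt_card.mpr ⟨i, hiA, j, hjA, by omega⟩
  have hac' : ((Finset.Icc 1 n).filter (fun i => f i < nxt n f i)).card ≤ 1 := hac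
  omega

lemma fixed_comp {n : ℕ} {f g : ℕ → ℕ} {x : ℕ} (hf : f ∈ Dn n) (hg : g ∈ Dn n)
    (h1 : 1 ≤ x) (hx : x ≤ n) (hfix : comp f g x = x) : f x = x ∧ g x = x := by
  have hfx := hf.1.1 x h1 hx
  have h2 : g (f x) ≤ f x := hg.2 _ hfx.1 hfx.2
  have h3 : f x ≤ x := hf.2 x h1 hx
  have hfix' : g (f x) = x := hfix
  have h4 : f x = x := by omega
  refine ⟨h4, ?_⟩
  show g x = x
  rwa [h4] at hfix'

/-- The witness: fixes `1` and `m`, sends `m+1` to `2`, the rest of `[1,n]` to `1`. -/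
def betaW (n m : ℕ) : ℕ → ℕ := fun x =>
  if x = m then m else if x = m + 1 then 2 else if 1 ≤ x ∧ x ≤ n then 1 else x

lemma betaW_val {n m : ℕ} (hm3 : 3 ≤ m) (hmn : m + 1 ≤ n) :
    ∀ x, 1 ≤ x → x ≤ n →
      betaW n m x = if x = m then m else if x = m + 1 then 2 else 1 := by
  intro x h1 h2
  simp only [betaW]
  split_ifs <;> first | rfl | omega

lemma betaW_Dn {n m : ℕ} (hm3 : 3 ≤ m) (hmn : m + 1 ≤ n) : betaW n m ∈ Dn n := by
  refine ⟨⟨?_, ?_⟩, ?_⟩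
  · intro x h1 hx
    simp only [betaW]
    split_ifs <;> omega
  · intro x hx
    simp only [betaW]
    split_ifs <;> omega
  · intro x h1 hx
    simp only [betaW]
    split_ifs <;> omega

lemma betaW_anticyclic {n m : ℕ} (hm3 : 3 ≤ m) (hmn : m + 1 ≤ n) :
    AntiCyclic n (betaW n m) := by
  have hb1 : betaW n m 1 = 1 := by
    rw [betaW_val hm3 hmn 1 le_rfl (by omega)]
    split_ifs <;> omega
  have hsub : (Finset.Icc 1 n).filter (fun i => betaW n m i < nxt n (betaW n m) i)
      ⊆ {m - 1} := by
    intro i hi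
    simp only [mem_filter, mem_Icc] at hi
    obtain ⟨⟨h1, h2⟩, hasc⟩ := hi
    simp only [mem_singleton]
    rw [nxt] at hasc
    by_contra hne
    split_ifs at hasc with hin
    · rw [hb1] at hasc
      have := (betaW_Dn hm3 hmn).1.1 i h1 h2
      omega
    · rw [betaW_val hm3 hmn i h1 h2,
        betaW_val hm3 hmn (i+1) (by omega) (by omega)] at hasc
      split_ifs at hasc <;> omega
  exact le_trans (Finset.card_le_card hsub) (by simp)

lemma betaW_not_cyclic {n m : ℕ} (hm3 : 3 ≤ m) (hmn : m + 1 ≤ n) :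
    ¬ Cyclic n (betaW n m) := by
  intro hc
  have hb1 : betaW n m 1 = 1 := by
    rw [betaW_val hm3 hmn 1 le_rfl (by omega)]
    split_ifs <;> omega
  have hc' : ((Finset.Icc 1 n).filter (fun i => nxt n (betaW n m) i < betaW n m i)).card ≤ 1 := hc
  have hmm : m ∈ (Finset.Icc 1 n).filter (fun i => nxt n (betaW n m) i < betaW n m i) := by
    simp only [mem_filter, mem_Icc]
    refine ⟨⟨by omega, by omega⟩, ?_⟩
    rw [nxt, if_neg (by omega : m ≠ n), betaW_val hm3 hmn m (by omega) (by omega),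
      betaW_val hm3 hmn (m+1) (by omega) (by omega)]
    split_ifs <;> omega
  have hv1 : betaW n m (m+1) = 2 := by
    rw [betaW_val hm3 hmn (m+1) (by omega) (by omega)]
    split_ifs <;> omega
  have hmm1 : m + 1 ∈ (Finset.Icc 1 n).filter (fun i => nxt n (betaW n m) i < betaW n m i) := by
    simp only [mem_filter, mem_Icc]
    refine ⟨⟨by omega, by omega⟩, ?_⟩
    rw [nxt]
    split_ifs with h
    · rw [hb1, hv1]
      omega
    · have hv2 : betaW n m (m+1+1) = 1 := by
        rw [betaW_val hm3 hmn (m+1+1) (by omega) (by omega)]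
        split_ifs <;> omega
      rw [hv2, hv1]
      omega
  have hlt : 1 < ((Finset.Icc 1 n).filter (fun i => nxt n (betaW n m) i < betaW n m i)).card :=
    Finset.one_lt_card.mpr ⟨m, hmm, m+1, hmm1, by omega⟩
  omega

lemma betaW_im_card {n m : ℕ} (hm3 : 3 ≤ m) (hmn : m + 1 ≤ n) :
    (im n (betaW n m)).card ≤ 3 := by
  have him : im n (betaW n m) ⊆ {1, 2, m} := by
    intro y hy
    simp only [im, mem_image, mem_Icc] at hy
    obtain ⟨x, hx, rfl⟩ := hy
    simp only [mem_insert, mem_singleton, betaW]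
    split_ifs <;> omega
  refine le_trans (Finset.card_le_card him) ?_
  have h1 := Finset.card_insert_le 1 ({2, m} : Finset ℕ)
  have h2 := Finset.card_insert_le 2 ({m} : Finset ℕ)
  simp only [Finset.card_singleton] at *
  omega

theorem generating_set_contains_reversing (n r : ℕ) (hn : 4 ≤ n) (hr : 3 ≤ r) (hrn : r ≤ n - 1)
    (A : Set (ℕ → ℕ)) (hA : A ⊆ ORDr n r) (hgen : {f | gen A f} = ORDr n r)
    (m : ℕ) (hm3 : 3 ≤ m) (hm : m ≤ n - 1) :
    ∃ α ∈ A, α ∈ RDstar n ∧ fixSet n α = {1, m} := by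
  have hn1 : 1 ≤ n := by omega
  have hmn : m + 1 ≤ n := by omega
  have hmem : ∀ h, gen A h → h ∈ ORDr n r := by
    intro h hh
    have : h ∈ {f | gen A f} := hh
    rwa [hgen] at this
  have key : ∀ h, gen A h → ¬ Cyclic n h → h m = m →
      ∃ α ∈ A, α ∈ RDstar n ∧ fixSet n α = {1, m} := by
    intro h hgenh
    induction hgenh with
    | @base f hfA =>
      intro hnc hfix
      have hfO : f ∈ ORDr n r := hA hfA
      have hfDn : f ∈ Dn n := hfO.1.1
      have hanti : AntiCyclic n f := by
        rcases hfO.1.2 with h | h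
        · exact absurd h hnc
        · exact h
      refine ⟨f, hfA, ⟨hfDn, hanti, hnc⟩, ?_⟩
      ext x
      simp only [fixSet, mem_filter, mem_Icc, mem_insert, mem_singleton]
      constructor
      · rintro ⟨⟨h1x, hxn⟩, hfx⟩
        by_contra hcon
        push_neg at hcon
        obtain ⟨hx1, hxm⟩ := hcon
        rcases lt_trichotomy x m with h | h | h
        · exact anticyclic_two_fixed hfDn hanti (by omega) h (by omega) hfx hfix
        · exact hxm h
        · exact anticyclic_two_fixed hfDn hanti (by omega) h hxn hfix hfx
      · rintro (rfl | rfl)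
        · exact ⟨⟨le_rfl, hn1⟩, Dn_one_eq hn1 hfDn⟩
        · exact ⟨⟨by omega, by omega⟩, hfix⟩
    | @mul f g hfg hgg ihf ihg =>
      intro hnc hfix
      have hfDn : f ∈ Dn n := (hmem f hfg).1.1
      have hgDn : g ∈ Dn n := (hmem g hgg).1.1
      obtain ⟨hfm, hgm⟩ := fixed_comp hfDn hgDn (by omega) (by omega) hfix
      by_cases hcf : Cyclic n f
      · by_cases hcg : Cyclic n g
        · exact absurd (cyclic_comp hn1 hfDn hgDn hcf hcg) hnc
        · exact ihg hcg hgm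
      · exact ihf hcf hfm
  have hbO : betaW n m ∈ ORDr n r := by
    refine ⟨⟨betaW_Dn hm3 hmn, Or.inr (betaW_anticyclic hm3 hmn)⟩, ?_⟩
    exact le_trans (betaW_im_card hm3 hmn) hr
  have hbgen : gen A (betaW n m) := by
    have : betaW n m ∈ {f | gen A f} := by rw [hgen]; exact hbO
    exact this
  refine key (betaW n m) hbgen (betaW_not_cyclic hm3 hmn) ?_
  simp [betaW]

end ORDPaper
end

section
/- For n ≥ 4 and 3 ≤ r ≤ n−1, with r̂ = min{r, ⌈(n+1)/2⌉}: for each m with n−r̂+2 ≤ m ≤ n−1, the transformation λ_{m,r̂} (sending [1,m−1] to 1 and mapping m, m+1, ..., n bijectively and order-reversingly onto [2m−n, m]) is undecomposable in ORD(n,r): if λ_{m,r̂} = αβ with α, β ∈ ORD(n,r), then α = λ_{m,r̂} or β = λ_{m,r̂}. -/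
open Finset

namespace ORDPaper

lemma only_one {s : Finset ℕ} {p : ℕ → Prop} [DecidablePred p]
    (h : (s.filter p).card ≤ 1) {a b : ℕ} (ha : a ∈ s) (hpa : p a)
    (hb : b ∈ s) (hab : a ≠ b) : ¬ p b := by
  intro hpb
  have hsub : ({a, b} : Finset ℕ) ⊆ s.filter p := by
    intro z hz
    simp only [Finset.mem_insert, Finset.mem_singleton] at hz
    rcases hz with rfl | rfl <;> simp [Finset.mem_filter, ha, hpa, hb, hpb]
  have hc := Finset.card_le_card hsub
  rw [Finset.card_pair hab] at hc
  omega

theorem lam_undecomposable (n r m : ℕ) (hn : 4 ≤ n) (hr : 3 ≤ r) (hrn : r ≤ n - 1)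
    (hm1 : n - rhat n r + 2 ≤ m) (hm2 : m ≤ n - 1)
    (α β : ℕ → ℕ) (hα : α ∈ ORDr n r) (hβ : β ∈ ORDr n r)
    (h : comp α β = lam n (rhat n r) m) :
    α = lam n (rhat n r) m ∨ β = lam n (rhat n r) m := by
  have hfacts : 3 ≤ rhat n r ∧ n + 2 ≤ rhat n r + m ∧ n + 2 ≤ 2 * m ∧ rhat n r ≤ n := by
    simp only [rhat] at hm1 ⊢
    omega
  obtain ⟨hR3, hRm, h2m, hRn⟩ := hfacts
  generalize hRdef : rhat n r = R at hR3 hRm hRn h ⊢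
  have hmn : m + 1 ≤ n := by omega
  have hm3 : 3 ≤ m := by omega
  -- evaluation of lam
  have lam_lo : ∀ x, 1 ≤ x → x < m → lam n R m x = 1 := by
    intro x h1 h2
    have hxn : x ≤ n := by omega
    simp [lam, h1, hxn, h2]
  have lam_hi : ∀ x, m ≤ x → x ≤ n → lam n R m x = 2 * m - x := by
    intro x h1 h2
    have h3 : ¬ x < m := by omega
    have h4 : x ≤ min (2 * m - (m - R) - 2) n := by omega
    simp [lam, (show 1 ≤ x by omega), h2, h3, h4]
  have lam_out : ∀ x, ¬(1 ≤ x ∧ x ≤ n) → lam n R m x = x := by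
    intro x hx
    simp only [lam]
    rw [if_pos hx]
  obtain ⟨⟨⟨hαT, hαD⟩, hαC⟩, -⟩ := hα
  obtain ⟨⟨⟨hβT, hβD⟩, hβC⟩, -⟩ := hβ
  have hpt : ∀ x, β (α x) = lam n R m x := fun x => congrFun h x
  have hα1 : α 1 = 1 :=
    le_antisymm (hαD 1 le_rfl (by omega)) (hαT.1 1 le_rfl (by omega)).1
  have hβ1 : β 1 = 1 := by
    have h1 := hpt 1
    rw [hα1, lam_lo 1 le_rfl (by omega)] at h1
    exact h1
  have hαm : α m = m := by
    have h1 := hpt m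
    rw [lam_hi m le_rfl (by omega)] at h1
    have hb := hαT.1 m (by omega) (by omega)
    have h2 := hβD (α m) hb.1 hb.2
    have h3 := hαD m (by omega) (by omega)
    omega
  have hβm : β m = m := by
    have h1 := hpt m
    rw [hαm, lam_hi m le_rfl (by omega)] at h1
    omega
  have hlow : ∀ x, m ≤ x → x ≤ n → 2 * m - x ≤ α x := by
    intro x h1 h2
    have h3 := hpt x
    rw [lam_hi x h1 h2] at h3
    have hb := hαT.1 x (by omega) h2
    have h4 := hβD (α x) hb.1 hb.2
    omega
  have hinj : ∀ x y, m ≤ x → x ≤ n → m ≤ y → y ≤ n → α x = α y → x = y := by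
    intro x y hx1 hx2 hy1 hy2 hxy
    have h3 := hpt x
    have h4 := hpt y
    rw [lam_hi x hx1 hx2] at h3
    rw [lam_hi y hy1 hy2] at h4
    rw [hxy] at h3
    omega
  rcases hαC with hc | hc
  · -- α cyclic : conclude β = lam
    have hc' : ((Finset.Icc 1 n).filter (fun i => nxt n α i < α i)).card ≤ 1 := hc
    have hdn : nxt n α n < α n := by
      have e1 : nxt n α n = 1 := by simp [nxt, hα1]
      have h2 := hlow n (by omega) le_rfl
      omega
    have hmono : ∀ i, 1 ≤ i → i + 1 ≤ n → α i ≤ α (i + 1) := by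
      intro i h1 h2
      by_contra hcon
      push_neg at hcon
      have hno := only_one hc' (Finset.mem_Icc.mpr ⟨by omega, le_rfl⟩) hdn
        (Finset.mem_Icc.mpr ⟨h1, by omega⟩) (by omega)
      apply hno
      have e : nxt n α i = α (i + 1) := by simp [nxt, (show i ≠ n by omega)]
      rw [e]
      exact hcon
    have hid : ∀ x, m ≤ x → x ≤ n → α x = x := by
      intro x hx
      induction x, hx using Nat.le_induction with
      | base => intro _; exact hαm
      | succ k hk ih =>
        intro hkn
        have h1 : α k = k := ih (by omega)
        have h2 : α k ≤ α (k + 1) := hmono k (by omega) hkn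
        have h3 : α (k + 1) ≤ k + 1 := hαD (k + 1) (by omega) hkn
        rcases Nat.lt_or_ge (α (k + 1)) (k + 1) with hlt | hge
        · exfalso
          have he : α (k + 1) = α k := by omega
          have := hinj (k + 1) k (by omega) hkn hk (by omega) he
          omega
        · omega
    have hβhi : ∀ x, m ≤ x → x ≤ n → β x = 2 * m - x := by
      intro x h1 h2
      have h3 := hpt x
      rw [hid x h1 h2, lam_hi x h1 h2] at h3
      exact h3
    have hβnc : ¬ Cyclic n β := by
      intro hcb
      have hcb' : ((Finset.Icc 1 n).filter (fun i => nxt n β i < β i)).card ≤ 1 := hcb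
      have hd1 : nxt n β m < β m := by
        have e1 : nxt n β m = β (m + 1) := by simp [nxt, (show m ≠ n by omega)]
        rw [e1, hβm, hβhi (m + 1) (by omega) (by omega)]
        omega
      have hd2 : nxt n β n < β n := by
        have e1 : nxt n β n = 1 := by simp [nxt, hβ1]
        rw [e1, hβhi n (by omega) le_rfl]
        omega
      exact only_one hcb' (Finset.mem_Icc.mpr ⟨by omega, by omega⟩) hd1
        (Finset.mem_Icc.mpr ⟨by omega, le_rfl⟩) (by omega) hd2
    have hβac : AntiCyclic n β := hβC.resolve_left hβnc
    have hβac' : ((Finset.Icc 1 n).filter (fun i => β i < nxt n β i)).card ≤ 1 := hβac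
    have hasc : β (m - 1) < nxt n β (m - 1) := by
      have e1 : nxt n β (m - 1) = β (m - 1 + 1) := by
        simp [nxt, (show m - 1 ≠ n by omega)]
      have e2 : m - 1 + 1 = m := by omega
      rw [e1, e2, hβm]
      have h1 := hβD (m - 1) (by omega) (by omega)
      omega
    have hβmono : ∀ i, 1 ≤ i → i + 1 ≤ m - 1 → β (i + 1) ≤ β i := by
      intro i h1 h2
      by_contra hcon
      push_neg at hcon
      have hno := only_one hβac' (Finset.mem_Icc.mpr ⟨by omega, by omega⟩) hasc
        (Finset.mem_Icc.mpr ⟨h1, by omega⟩) (by omega)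
      apply hno
      have e : nxt n β i = β (i + 1) := by simp [nxt, (show i ≠ n by omega)]
      rw [e]
      exact hcon
    have hβlo : ∀ x, 1 ≤ x → x < m → β x = 1 := by
      intro x hx
      induction x, hx using Nat.le_induction with
      | base => intro _; exact hβ1
      | succ k hk ih =>
        intro hkm
        have h1 : β k = 1 := ih (by omega)
        have h2 := hβmono k (by omega) (by omega)
        have h3 := (hβT.1 (k + 1) (by omega) (by omega)).1
        omega
    refine Or.inr (funext fun x => ?_)
    by_cases hx : 1 ≤ x ∧ x ≤ n
    · rcases Nat.lt_or_ge x m with h' | h'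
      · rw [hβlo x hx.1 h', lam_lo x hx.1 h']
      · rw [hβhi x h' hx.2, lam_hi x h' hx.2]
    · rw [hβT.2 x hx, lam_out x hx]
  · -- α anticyclic : conclude α = lam
    have hc' : ((Finset.Icc 1 n).filter (fun i => α i < nxt n α i)).card ≤ 1 := hc
    have hasc : α (m - 1) < nxt n α (m - 1) := by
      have e1 : nxt n α (m - 1) = α (m - 1 + 1) := by
        simp [nxt, (show m - 1 ≠ n by omega)]
      have e2 : m - 1 + 1 = m := by omega
      rw [e1, e2, hαm]
      have h1 := hαD (m - 1) (by omega) (by omega)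
      omega
    have hαmono : ∀ i, 1 ≤ i → i + 1 ≤ n → i + 1 ≠ m → α (i + 1) ≤ α i := by
      intro i h1 h2 h3
      by_contra hcon
      push_neg at hcon
      have hno := only_one hc' (Finset.mem_Icc.mpr ⟨by omega, by omega⟩) hasc
        (Finset.mem_Icc.mpr ⟨h1, by omega⟩) (by omega)
      apply hno
      have e : nxt n α i = α (i + 1) := by simp [nxt, (show i ≠ n by omega)]
      rw [e]
      exact hcon
    have hαlo : ∀ x, 1 ≤ x → x < m → α x = 1 := by
      intro x hx
      induction x, hx using Nat.le_induction with
      | base => intro _; exact hα1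
      | succ k hk ih =>
        intro hkm
        have h1 : α k = 1 := ih (by omega)
        have h2 := hαmono k (by omega) (by omega) (by omega)
        have h3 := (hαT.1 (k + 1) (by omega) (by omega)).1
        omega
    have hαhi : ∀ x, m ≤ x → x ≤ n → α x = 2 * m - x := by
      intro x hx
      induction x, hx using Nat.le_induction with
      | base => intro _; rw [hαm]; omega
      | succ k hk ih =>
        intro hkn
        have h1 : α k = 2 * m - k := ih (by omega)
        have h2 := hαmono k (by omega) hkn (by omega)
        have h3 := hlow (k + 1) (by omega) hkn
        rcases Nat.eq_or_lt_of_le h2 with he | hlt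
        · exfalso
          have := hinj (k + 1) k (by omega) hkn hk (by omega) he
          omega
        · omega
    refine Or.inl (funext fun x => ?_)
    by_cases hx : 1 ≤ x ∧ x ≤ n
    · rcases Nat.lt_or_ge x m with h' | h'
      · rw [hαlo x hx.1 h', lam_lo x hx.1 h']
      · rw [hαhi x h' hx.2, lam_hi x h' hx.2]
    · rw [hαT.2 x hx, lam_out x hx]


end ORDPaper
end

section
/- For n ≥ 4, 3 ≤ r ≤ n−1, r̂ = min{r, ⌈(n+1)/2⌉}, and 3 ≤ m ≤ n−r̂+1: the transformation λ_{m,r̂} is decomposable in ORD(n,r); specifically λ_{m,r̂} = α_{m,r̂}·β_{m,r̂} where α_{m,r̂} is the idempotent fixing {1} ∪ [m, 2m−p−2] and sending everything else appropriately to 1, and β_{m,r̂} sends [1,m−1] to 1, maps m, ..., 2m−p−3 order-reversingly to m, ..., p+3 and [2m−p−2, n] to p+2, with p = max{0, m−r̂}, and both α_{m,r̂}, β_{m,r̂} ∈ ORD(n,r) are distinct from λ_{m,r̂}. -/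
open Finset

namespace ORDPaper

theorem lam_decomposable (n r m : ℕ) (hn : 4 ≤ n) (hr : 3 ≤ r) (hrn : r ≤ n - 1)
    (hm3 : 3 ≤ m) (hm : m ≤ n - rhat n r + 1) :
    alphaMap n (rhat n r) m ∈ ORDr n r ∧ betaMap n (rhat n r) m ∈ ORDr n r ∧
    comp (alphaMap n (rhat n r) m) (betaMap n (rhat n r) m) = lam n (rhat n r) m ∧
    alphaMap n (rhat n r) m ≠ lam n (rhat n r) m ∧
    betaMap n (rhat n r) m ≠ lam n (rhat n r) m := by
  have hq : rhat n r = min r ((n + 2) / 2) := rfl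
  set q := rhat n r with hqdef
  have hq3 : 3 ≤ q := by omega
  have hqr : q ≤ r := by omega
  have hmn : m + 2 ≤ n := by omega
  have hK1 : m + 1 ≤ 2 * m - (m - q) - 2 := by omega
  have hK2 : 2 * m - (m - q) - 2 < n := by omega
  -- alpha is a transformation, decreasing, cyclic, small image
  have haT : IsTrans n (alphaMap n q m) := by
    constructor
    · intro x hx1 hx2; simp only [alphaMap]; split_ifs <;> omega
    · intro x hx; simp only [alphaMap]; split_ifs <;> omega
  have haD : Decreasing n (alphaMap n q m) := by
    intro x hx1 hx2; simp only [alphaMap]; split_ifs <;> omega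
  have haC : Cyclic n (alphaMap n q m) := by
    unfold Cyclic
    refine le_trans (Finset.card_le_card (fun i hi => ?_)) (le_of_eq
      (Finset.card_singleton (2 * m - (m - q) - 2)))
    simp only [Finset.mem_filter, Finset.mem_Icc] at hi
    simp only [Finset.mem_singleton]
    obtain ⟨⟨hi1, hi2⟩, hlt⟩ := hi
    simp only [nxt, alphaMap] at hlt
    split_ifs at hlt <;> omega
  have haIm : (im n (alphaMap n q m)).card ≤ r := by
    have hsub : im n (alphaMap n q m) ⊆ insert 1 (Finset.Icc m (2 * m - (m - q) - 2)) := by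
      intro y hy
      simp only [im, Finset.mem_image, Finset.mem_Icc] at hy
      obtain ⟨x, hx, rfl⟩ := hy
      simp only [Finset.mem_insert, Finset.mem_Icc, alphaMap]
      split_ifs <;> omega
    calc (im n (alphaMap n q m)).card
        ≤ (insert 1 (Finset.Icc m (2 * m - (m - q) - 2))).card := Finset.card_le_card hsub
      _ ≤ (Finset.Icc m (2 * m - (m - q) - 2)).card + 1 := Finset.card_insert_le _ _
      _ = (2 * m - (m - q) - 2) + 1 - m + 1 := by rw [Nat.card_Icc]
      _ ≤ r := by omega
  -- beta is a transformation, decreasing, anticyclic, small image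
  have hbT : IsTrans n (betaMap n q m) := by
    constructor
    · intro x hx1 hx2; simp only [betaMap]; split_ifs <;> omega
    · intro x hx; simp only [betaMap]; split_ifs <;> omega
  have hbD : Decreasing n (betaMap n q m) := by
    intro x hx1 hx2; simp only [betaMap]; split_ifs <;> omega
  have hbC : AntiCyclic n (betaMap n q m) := by
    unfold AntiCyclic
    refine le_trans (Finset.card_le_card (fun i hi => ?_)) (le_of_eq
      (Finset.card_singleton (m - 1)))
    simp only [Finset.mem_filter, Finset.mem_Icc] at hi
    simp only [Finset.mem_singleton]
    obtain ⟨⟨hi1, hi2⟩, hlt⟩ := hi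
    simp only [nxt, betaMap] at hlt
    split_ifs at hlt <;> omega
  have hbIm : (im n (betaMap n q m)).card ≤ r := by
    have hsub : im n (betaMap n q m) ⊆ insert 1 (Finset.Icc ((m - q) + 2) m) := by
      intro y hy
      simp only [im, Finset.mem_image, Finset.mem_Icc] at hy
      obtain ⟨x, hx, rfl⟩ := hy
      simp only [Finset.mem_insert, Finset.mem_Icc, betaMap]
      split_ifs <;> omega
    calc (im n (betaMap n q m)).card
        ≤ (insert 1 (Finset.Icc ((m - q) + 2) m)).card := Finset.card_le_card hsub
      _ ≤ (Finset.Icc ((m - q) + 2) m).card + 1 := Finset.card_insert_le _ _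
      _ = m + 1 - ((m - q) + 2) + 1 := by rw [Nat.card_Icc]
      _ ≤ r := by omega
  refine ⟨⟨⟨⟨haT, haD⟩, Or.inl haC⟩, haIm⟩, ⟨⟨⟨hbT, hbD⟩, Or.inr hbC⟩, hbIm⟩, ?_, ?_, ?_⟩
  · funext x
    simp only [comp, alphaMap, betaMap, lam]
    split_ifs <;> omega
  · intro h
    have h2 := congrFun h (2 * m - (m - q) - 2)
    simp only [alphaMap, lam] at h2
    split_ifs at h2 <;> omega
  · intro h
    have h2 := congrFun h (2 * m - (m - q) - 1)
    simp only [betaMap, lam] at h2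
    split_ifs at h2 <;> omega

end ORDPaper
end
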